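/- arXiv:1405.1627 — 4 statements merged into one kernel-verified Lean document; each statement's English description precedes it below -/
import Mathlib

section
/- If p(x) is an integer polynomial of degree n that factors over ℤ as p = f·g with deg f = n₁ ≥ 1 and deg g = n₂ ≥ 1, then (2^{n₁+n₂-2} √(n₁+n₂+1))^{-1} · H(f)·H(g) ≤ H(p) ≤ (1+min(n₁,n₂)) · H(f)·H(g), where H denotes the height (maximum absolute value of coefficients). -/
open Polynomial Finset

/-- The (naive) height of an integer polynomial, as a real number. -/
noncomputable def polyHeight (p : Polynomial ℤ) : ℝ :=
  ((p.support.sup fun i => (p.coeff i).natAbs : ℕ) : ℝ)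


noncomputable def sq2 (N : ℕ) (p : Polynomial ℂ) : ℝ :=
  ∑ i ∈ Finset.range N, Complex.normSq (p.coeff i)

lemma normSq_swap (a x y : ℂ) :
    Complex.normSq (x - a*y) = Complex.normSq ((starRingEnd ℂ) a * x - y)
      + (1 - Complex.normSq a) * (Complex.normSq x - Complex.normSq y) := by
  simp only [Complex.normSq_apply, Complex.sub_re, Complex.sub_im, Complex.mul_re,
    Complex.mul_im, Complex.conj_re, Complex.conj_im]
  ring

lemma sq2_swap (a : ℂ) (q : Polynomial ℂ) (N : ℕ) (hq : q.natDegree < N) :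
    sq2 (N+1) ((X - C a) * q) = sq2 (N+1) ((C ((starRingEnd ℂ) a) * X - 1) * q) := by
  have c1 : ∀ i, ((X - C a) * q).coeff (i+1) = q.coeff i - a * q.coeff (i+1) := by
    intro i
    simp [sub_mul, coeff_X_mul, coeff_C_mul]
  have c10 : ((X - C a) * q).coeff 0 = - (a * q.coeff 0) := by
    simp [sub_mul, mul_coeff_zero]
  have c2 : ∀ i, ((C ((starRingEnd ℂ) a) * X - 1) * q).coeff (i+1)
      = (starRingEnd ℂ) a * q.coeff i - q.coeff (i+1) := by
    intro i
    simp [sub_mul, mul_assoc, coeff_X_mul, coeff_C_mul]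
  have c20 : ((C ((starRingEnd ℂ) a) * X - 1) * q).coeff 0 = - q.coeff 0 := by
    simp [sub_mul, mul_assoc, mul_coeff_zero]
  have hqN : q.coeff N = 0 := coeff_eq_zero_of_natDegree_lt hq
  unfold sq2
  rw [Finset.sum_range_succ', Finset.sum_range_succ']
  simp only [c1, c10, c2, c20]
  have key : ∀ i, Complex.normSq (q.coeff i - a * q.coeff (i+1))
      = Complex.normSq ((starRingEnd ℂ) a * q.coeff i - q.coeff (i+1))
        + (1 - Complex.normSq a) * (Complex.normSq (q.coeff i) - Complex.normSq (q.coeff (i+1))) :=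
    fun i => normSq_swap a _ _
  rw [Finset.sum_congr rfl (fun i _ => key i), Finset.sum_add_distrib, ← Finset.mul_sum,
      Finset.sum_range_sub' (fun i => Complex.normSq (q.coeff i)) N, hqN]
  simp [Complex.normSq_neg, map_mul]
  ring

lemma maxone_prod_nonneg (S : Multiset ℂ) : 0 ≤ (S.map (fun α => max 1 ‖α‖)).prod :=
  Multiset.prod_nonneg (by
    intro a ha
    obtain ⟨x, -, rfl⟩ := Multiset.mem_map.1 ha
    positivity)

lemma maxone_prod_one_le (S : Multiset ℂ) : 1 ≤ (S.map (fun α => max 1 ‖α‖)).prod :=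
  Multiset.one_le_prod (by
    intro a ha
    obtain ⟨x, -, rfl⟩ := Multiset.mem_map.1 ha
    exact le_max_left _ _)

lemma sq2_nonneg (N p) : 0 ≤ sq2 N p :=
  Finset.sum_nonneg fun _ _ => Complex.normSq_nonneg _

lemma normSq_coeff_le_sq2 {N p} (k : ℕ) (hk : k < N) : Complex.normSq (p.coeff k) ≤ sq2 N p :=
  Finset.single_le_sum (fun _ _ => Complex.normSq_nonneg _) (Finset.mem_range.2 hk)


/-- Landau's inequality, in root form. -/
lemma landau_aux : ∀ (m : ℕ) (S : Multiset ℂ) (c : ℂ),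
    (S.filter (fun α => 1 < ‖α‖)).card = m →
    (‖c‖ * (S.map (fun α => max 1 ‖α‖)).prod)^2
      ≤ sq2 (Multiset.card S + 1) (C c * (S.map (fun α => X - C α)).prod) := by
  intro m
  induction m using Nat.strong_induction_on with
  | _ m IH =>
    intro S c hm
    rcases Nat.eq_zero_or_pos m with rfl | hmpos
    · -- no roots outside the unit disk
      have hall : ∀ α ∈ S, ¬ (1 < ‖α‖) := by
        intro α hα h1
        have : α ∈ S.filter (fun α => 1 < ‖α‖) := Multiset.mem_filter.2 ⟨hα, h1⟩
        rw [Multiset.card_eq_zero.1 hm] at this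
        simp at this
      have hprod1 : (S.map (fun α => max 1 ‖α‖)).prod = 1 := by
        apply Multiset.prod_eq_one
        intro x hx
        obtain ⟨α, hα, rfl⟩ := Multiset.mem_map.1 hx
        exact max_eq_left (le_of_not_gt (hall α hα))
      rw [hprod1, mul_one]
      have hmon : ((S.map (fun α => X - C α)).prod).Monic :=
        monic_multiset_prod_of_monic _ _ (fun α _ => monic_X_sub_C α)
      have hdeg : ((S.map (fun α => X - C α)).prod).natDegree = Multiset.card S :=
        natDegree_multiset_prod_X_sub_C_eq_card S
      have hcoeff : (C c * (S.map (fun α => X - C α)).prod).coeff (Multiset.card S) = c := by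
        rw [coeff_C_mul, ← hdeg, ← Polynomial.leadingCoeff, hmon.leadingCoeff, mul_one]
      have hle := normSq_coeff_le_sq2 (p := C c * (S.map (fun α => X - C α)).prod)
        (Multiset.card S) (Nat.lt_succ_self _)
      rw [hcoeff] at hle
      calc ‖c‖^2 = Complex.normSq c := Complex.sq_norm c
        _ ≤ _ := hle
    · -- there is a root a with ‖a‖ > 1
      have hfilne : S.filter (fun α => 1 < ‖α‖) ≠ 0 := by
        intro h; rw [h] at hm; simp at hm; omega
      obtain ⟨a, hafil⟩ := Multiset.exists_mem_of_ne_zero hfilne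
      have haS : a ∈ S := (Multiset.mem_filter.1 hafil).1
      have ha1 : 1 < ‖a‖ := (Multiset.mem_filter.1 hafil).2
      have ha0 : a ≠ 0 := by
        intro h; rw [h] at ha1; simp at ha1; linarith
      have hca0 : (starRingEnd ℂ) a ≠ 0 := by simpa using ha0
      set T := S.erase a with hT
      have hST : S = a ::ₘ T := (Multiset.cons_erase haS).symm
      set R : Polynomial ℂ := (T.map (fun α => X - C α)).prod with hR
      set q : Polynomial ℂ := C c * R with hq
      have hcardT : Multiset.card T + 1 = Multiset.card S := by
        rw [hST]; simp
      have hdegR : R.natDegree = Multiset.card T := natDegree_multiset_prod_X_sub_C_eq_card T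
      have hdegq : q.natDegree < Multiset.card S := by
        have : q.natDegree ≤ (C c).natDegree + R.natDegree := natDegree_mul_le
        simp only [natDegree_C, zero_add, hdegR] at this
        omega
      have hps : C c * (S.map (fun α => X - C α)).prod = (X - C a) * q := by
        rw [hST]; simp only [Multiset.map_cons, Multiset.prod_cons, hq, hR]; ring
      -- swap
      have hswap := sq2_swap a q (Multiset.card S) hdegq
      -- the swapped polynomial in standard form
      set b : ℂ := ((starRingEnd ℂ) a)⁻¹ with hb
      set S' : Multiset ℂ := b ::ₘ T with hS'
      have hps' : (C ((starRingEnd ℂ) a) * X - 1) * q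
          = C ((starRingEnd ℂ) a * c) * (S'.map (fun α => X - C α)).prod := by
        simp only [hS', Multiset.map_cons, Multiset.prod_cons, hq]
        rw [map_mul]
        have : C ((starRingEnd ℂ) a) * (X - C b) = C ((starRingEnd ℂ) a) * X - 1 := by
          rw [mul_sub, ← C_mul, hb, mul_inv_cancel₀ hca0, C_1]
        rw [← this]; ring
      have hcardS' : Multiset.card S' = Multiset.card S := by
        rw [hS', Multiset.card_cons]; exact hcardT
      have hnb : ‖b‖ < 1 := by
        rw [hb]
        rw [norm_inv, RCLike.norm_conj]
        exact inv_lt_one_of_one_lt₀ ha1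
      have hfilS' : (S'.filter (fun α => 1 < ‖α‖)).card = m - 1 := by
        have h1 : S.filter (fun α => 1 < ‖α‖) = a ::ₘ T.filter (fun α => 1 < ‖α‖) := by
          rw [hST, Multiset.filter_cons, if_pos ha1]; rfl
        have h2 : S'.filter (fun α => 1 < ‖α‖) = T.filter (fun α => 1 < ‖α‖) := by
          rw [hS', Multiset.filter_cons, if_neg (by push_neg; exact le_of_lt hnb)]; simp
        rw [h2]
        have := hm; rw [h1, Multiset.card_cons] at this; omega
      have hIH := IH (m-1) (by omega) S' ((starRingEnd ℂ) a * c) hfilS'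
      rw [hcardS'] at hIH
      rw [hps, hswap, hps']
      refine le_trans (le_of_eq ?_) hIH
      congr 1
      rw [hS', Multiset.map_cons, Multiset.prod_cons]
      rw [norm_mul, RCLike.norm_conj]
      have : max 1 ‖b‖ = 1 := max_eq_left (le_of_lt hnb)
      rw [this, one_mul]
      have hS2 : (S.map (fun α => max 1 ‖α‖)).prod = max 1 ‖a‖ * (T.map (fun α => max 1 ‖α‖)).prod := by
        rw [hST]; simp
      rw [hS2, max_eq_right (le_of_lt ha1)]
      ring

lemma norm_mprod (T : Multiset ℂ) : ‖T.prod‖ = (T.map (fun z => ‖z‖)).prod := by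
  induction T using Multiset.induction with
  | empty => simp
  | cons a T ih => simp [norm_mul, ih]

lemma norm_prod_le_maxone (T : Multiset ℂ) :
    (T.map (fun z => ‖z‖)).prod ≤ (T.map (fun α => max 1 ‖α‖)).prod := by
  induction T using Multiset.induction with
  | empty => simp
  | cons a T ih =>
    simp only [Multiset.map_cons, Multiset.prod_cons]
    exact mul_le_mul (le_max_right _ _) ih
      (Multiset.prod_nonneg (by intro x hx; obtain ⟨z,-,rfl⟩ := Multiset.mem_map.1 hx; positivity))
      (le_trans zero_le_one (le_max_left _ _))

lemma mprod_le_maxone {T S : Multiset ℂ} (h : T ≤ S) :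
    ‖T.prod‖ ≤ (S.map (fun α => max 1 ‖α‖)).prod := by
  obtain ⟨U, rfl⟩ := Multiset.le_iff_exists_add.1 h
  rw [Multiset.map_add, Multiset.prod_add, norm_mprod]
  refine le_trans (norm_prod_le_maxone T) (le_mul_of_one_le_right (maxone_prod_nonneg T) (maxone_prod_one_le U))

lemma choose_le_two_pow : ∀ (n j : ℕ), n.choose j ≤ 2^(n-1)
  | 0, j => by cases j <;> simp
  | 1, j => by
      match j with
      | 0 => simp
      | 1 => simp
      | (j+2) => simp [Nat.choose_eq_zero_of_lt]
  | (n+2), j => by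
      match j with
      | 0 => simp [Nat.one_le_two_pow]
      | (j+1) =>
        rw [Nat.choose_succ_succ]
        have h1 := choose_le_two_pow (n+1) j
        have h2 := choose_le_two_pow (n+1) (j+1)
        simp only [Nat.add_sub_cancel] at *
        calc (n+1).choose j + (n+1).choose (j+1) ≤ 2^n + 2^n := Nat.add_le_add h1 h2
          _ = 2^(n+1) := by ring

/-- Coefficient bound via elementary symmetric functions. -/
lemma coeff_le_aux (S : Multiset ℂ) (c : ℂ) (k : ℕ) :
    ‖(C c * (S.map (fun α => X - C α)).prod).coeff k‖ ≤
      (((Multiset.card S).choose ((Multiset.card S) - k)) : ℝ)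
        * (‖c‖ * (S.map (fun α => max 1 ‖α‖)).prod) := by
  set n := Multiset.card S with hn
  by_cases hk : k ≤ n
  · rw [coeff_C_mul, Multiset.prod_X_sub_C_coeff S hk]
    rw [norm_mul, norm_mul, norm_pow, norm_neg, norm_one, one_pow, one_mul]
    have hesymm : ‖S.esymm (n - k)‖ ≤ (n.choose (n-k) : ℝ) * (S.map (fun α => max 1 ‖α‖)).prod := by
      have h1 : ‖S.esymm (n-k)‖ ≤ (((S.powersetCard (n-k)).map Multiset.prod).map (fun z => ‖z‖)).sum :=
        norm_multiset_sum_le _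
      have h2 : (((S.powersetCard (n-k)).map Multiset.prod).map (fun z => ‖z‖)).sum
          ≤ (Multiset.card (((S.powersetCard (n-k)).map Multiset.prod).map (fun z => ‖z‖)))
              • ((S.map (fun α => max 1 ‖α‖)).prod) := by
        apply Multiset.sum_le_card_nsmul
        intro x hx
        simp only [Multiset.map_map, Multiset.mem_map, Function.comp] at hx
        obtain ⟨T, hT, rfl⟩ := hx
        exact mprod_le_maxone (Multiset.mem_powersetCard.1 hT).1
      rw [Multiset.card_map, Multiset.card_map, Multiset.card_powersetCard, ← hn] at h2
      refine le_trans h1 (le_trans h2 ?_)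
      rw [nsmul_eq_mul]
    calc ‖c‖ * ‖S.esymm (n-k)‖
        ≤ ‖c‖ * ((n.choose (n-k) : ℝ) * (S.map (fun α => max 1 ‖α‖)).prod) :=
          mul_le_mul_of_nonneg_left hesymm (norm_nonneg c)
      _ = (n.choose (n-k) : ℝ) * (‖c‖ * (S.map (fun α => max 1 ‖α‖)).prod) := by ring
  · have hdeg : (C c * (S.map (fun α => X - C α)).prod).natDegree < k := by
      have h := natDegree_mul_le (p := C c) (q := (S.map (fun α => X - C α)).prod)
      rw [natDegree_C, zero_add, natDegree_multiset_prod_X_sub_C_eq_card] at h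
      omega
    rw [coeff_eq_zero_of_natDegree_lt hdeg, norm_zero]
    exact mul_nonneg (Nat.cast_nonneg _) (mul_nonneg (norm_nonneg _) (maxone_prod_nonneg S))


noncomputable def Hnat (p : Polynomial ℤ) : ℕ :=
  p.support.sup fun i => (p.coeff i).natAbs

lemma coeff_natAbs_le (p : Polynomial ℤ) (i : ℕ) : (p.coeff i).natAbs ≤ Hnat p := by
  by_cases h : i ∈ p.support
  · exact Finset.le_sup (f := fun i => (p.coeff i).natAbs) h
  · rw [Polynomial.notMem_support_iff.1 h]; simp

lemma coeff_abs_le (p : Polynomial ℤ) (i : ℕ) : |p.coeff i| ≤ (Hnat p : ℤ) := by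
  rw [Int.abs_eq_natAbs]
  exact_mod_cast coeff_natAbs_le p i

lemma exists_coeff_natAbs_eq {p : Polynomial ℤ} (hp : p ≠ 0) :
    ∃ i, (p.coeff i).natAbs = Hnat p := by
  obtain ⟨i, -, h⟩ := Finset.exists_mem_eq_sup p.support
    (Polynomial.nonempty_support_iff.2 hp) (fun i => (p.coeff i).natAbs)
  exact ⟨i, h.symm⟩

lemma upper_coeff_aux (f g : Polynomial ℤ) (k : ℕ) :
    |(f * g).coeff k| ≤ ((f.natDegree + 1 : ℕ) : ℤ) * (Hnat f * Hnat g) := by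
  rw [Polynomial.coeff_mul]
  refine le_trans (Finset.abs_sum_le_sum_abs _ _) ?_
  set s := Finset.HasAntidiagonal.antidiagonal k with hs
  set t := s.filter (fun x => x.1 ≤ f.natDegree) with ht
  have hzero : ∀ x ∈ s, x ∉ t → |f.coeff x.1 * g.coeff x.2| = 0 := by
    intro x hx hxt
    have : ¬ x.1 ≤ f.natDegree := by
      intro h; exact hxt (Finset.mem_filter.2 ⟨hx, h⟩)
    rw [Polynomial.coeff_eq_zero_of_natDegree_lt (by omega)]
    simp
  rw [← Finset.sum_subset (Finset.filter_subset _ s) (fun x hx hxt => hzero x hx hxt)]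
  have hcard : t.card ≤ f.natDegree + 1 := by
    have : t.card ≤ (Finset.range (f.natDegree + 1)).card := by
      apply Finset.card_le_card_of_injOn (fun x => x.1)
      · intro x hx
        rw [Finset.mem_coe, ht, Finset.mem_filter] at hx
        exact Finset.mem_range.2 (show x.1 < f.natDegree + 1 by omega)
      · intro x hx y hy hxy
        rw [Finset.mem_coe, ht, Finset.mem_filter, hs, Finset.HasAntidiagonal.mem_antidiagonal] at hx hy
        have h1 : x.1 = y.1 := hxy
        have : x.2 = y.2 := by omega
        exact Prod.ext hxy this
    simpa using this
  have hbound : ∀ x ∈ t, |f.coeff x.1 * g.coeff x.2| ≤ (Hnat f : ℤ) * (Hnat g : ℤ) := by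
    intro x hx
    rw [abs_mul]
    exact mul_le_mul (coeff_abs_le f x.1) (coeff_abs_le g x.2) (abs_nonneg _) (Int.ofNat_nonneg _)
  calc ∑ x ∈ t, |f.coeff x.1 * g.coeff x.2| ≤ t.card • ((Hnat f : ℤ) * (Hnat g : ℤ)) :=
        Finset.sum_le_card_nsmul t _ _ hbound
    _ = (t.card : ℤ) * ((Hnat f : ℤ) * (Hnat g : ℤ)) := by simp [nsmul_eq_mul]
    _ ≤ _ := by
        apply mul_le_mul_of_nonneg_right _ (by positivity)
        exact_mod_cast hcard

lemma Hnat_mul_le (f g : Polynomial ℤ) :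
    Hnat (f * g) ≤ (f.natDegree + 1) * (Hnat f * Hnat g) := by
  apply Finset.sup_le
  intro i _
  have h := upper_coeff_aux f g i
  rw [Int.abs_eq_natAbs] at h
  exact_mod_cast h

/-- Gelfond's inequality for the height of a product of integer polynomials. -/
theorem gelfond_height_bounds (f g : Polynomial ℤ) (n₁ n₂ : ℕ)
    (hn₁ : 1 ≤ n₁) (hn₂ : 1 ≤ n₂)
    (hf : f.natDegree = n₁) (hg : g.natDegree = n₂) :
    ((2 : ℝ) ^ (n₁ + n₂ - 2) * Real.sqrt (n₁ + n₂ + 1))⁻¹ * (polyHeight f * polyHeight g)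
      ≤ polyHeight (f * g) ∧
    polyHeight (f * g) ≤ (1 + min n₁ n₂) * (polyHeight f * polyHeight g) := by
  have hf0 : f ≠ 0 := by intro h; rw [h, natDegree_zero] at hf; omega
  have hg0 : g ≠ 0 := by intro h; rw [h, natDegree_zero] at hg; omega
  have ePf : polyHeight f = ((Hnat f : ℕ) : ℝ) := rfl
  have ePg : polyHeight g = ((Hnat g : ℕ) : ℝ) := rfl
  have ePfg : polyHeight (f * g) = ((Hnat (f * g) : ℕ) : ℝ) := rfl
  constructor
  · -- lower bound
    set F := f.map (Int.castRingHom ℂ) with hF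
    set G := g.map (Int.castRingHom ℂ) with hG
    have hinj : Function.Injective (Int.castRingHom ℂ) := Int.cast_injective
    have hF0 : F ≠ 0 := (Polynomial.map_ne_zero_iff hinj).2 hf0
    have hG0 : G ≠ 0 := (Polynomial.map_ne_zero_iff hinj).2 hg0
    have hdegF : F.natDegree = n₁ := by rw [hF, natDegree_map_eq_of_injective hinj, hf]
    have hdegG : G.natDegree = n₂ := by rw [hG, natDegree_map_eq_of_injective hinj, hg]
    set MF : ℝ := ‖F.leadingCoeff‖ * (F.roots.map (fun α => max 1 ‖α‖)).prod with hMF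
    set MG : ℝ := ‖G.leadingCoeff‖ * (G.roots.map (fun α => max 1 ‖α‖)).prod with hMG
    have hMFnn : 0 ≤ MF := mul_nonneg (norm_nonneg _) (maxone_prod_nonneg _)
    have hMGnn : 0 ≤ MG := mul_nonneg (norm_nonneg _) (maxone_prod_nonneg _)
    -- coefficient norms of the complexified polynomials
    have hcoeffF : ∀ i, ‖F.coeff i‖ = ((f.coeff i).natAbs : ℝ) := by
      intro i
      rw [hF, Polynomial.coeff_map]
      show ‖((f.coeff i : ℤ) : ℂ)‖ = _
      rw [Complex.norm_intCast, Nat.cast_natAbs, Int.cast_abs]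
    have hcoeffG : ∀ i, ‖G.coeff i‖ = ((g.coeff i).natAbs : ℝ) := by
      intro i
      rw [hG, Polynomial.coeff_map]
      show ‖((g.coeff i : ℤ) : ℂ)‖ = _
      rw [Complex.norm_intCast, Nat.cast_natAbs, Int.cast_abs]
    -- height bounded by 2^(n-1) * Mahler measure
    have key : ∀ (p : Polynomial ℤ) (P : Polynomial ℂ) (n : ℕ), p ≠ 0 → P ≠ 0 →
        P.natDegree = n → (∀ i, ‖P.coeff i‖ = ((p.coeff i).natAbs : ℝ)) →
        (Hnat p : ℝ) ≤ (2:ℝ)^(n-1) *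
          (‖P.leadingCoeff‖ * (P.roots.map (fun α => max 1 ‖α‖)).prod) := by
      intro p P n hp0 hP0 hdeg hc
      obtain ⟨k₀, hk₀⟩ := exists_coeff_natAbs_eq hp0
      have hsplit : Polynomial.Splits P := IsAlgClosed.splits P
      have hcard : Multiset.card P.roots = n := by
        rw [Polynomial.splits_iff_card_roots.1 hsplit, hdeg]
      have heq : P = C P.leadingCoeff * (P.roots.map (fun α => X - C α)).prod :=
        hsplit.eq_prod_roots
      have h1 : ‖P.coeff k₀‖ ≤ ((n.choose (n - k₀)) : ℝ) *
          (‖P.leadingCoeff‖ * (P.roots.map (fun α => max 1 ‖α‖)).prod) := by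
        have := coeff_le_aux P.roots P.leadingCoeff k₀
        rw [hcard] at this
        calc ‖P.coeff k₀‖ = ‖(C P.leadingCoeff * (P.roots.map (fun α => X - C α)).prod).coeff k₀‖ := by
              rw [← heq]
          _ ≤ _ := this
      have h2 : ((n.choose (n - k₀)) : ℝ) ≤ (2:ℝ)^(n-1) := by
        have := choose_le_two_pow n (n - k₀)
        calc ((n.choose (n - k₀)) : ℝ) ≤ ((2^(n-1) : ℕ) : ℝ) := Nat.cast_le.2 this
          _ = (2:ℝ)^(n-1) := by push_cast; ring
      calc (Hnat p : ℝ) = ‖P.coeff k₀‖ := by rw [hc k₀, hk₀]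
        _ ≤ _ := h1
        _ ≤ _ := mul_le_mul_of_nonneg_right h2
            (mul_nonneg (norm_nonneg _) (maxone_prod_nonneg _))
    have hHf := key f F n₁ hf0 hF0 hdegF hcoeffF
    have hHg := key g G n₂ hg0 hG0 hdegG hcoeffG
    -- multiplicativity of the Mahler measure
    set P := F * G with hP
    have hP0 : P ≠ 0 := mul_ne_zero hF0 hG0
    set MP : ℝ := ‖P.leadingCoeff‖ * (P.roots.map (fun α => max 1 ‖α‖)).prod with hMP
    have hMPnn : 0 ≤ MP := mul_nonneg (norm_nonneg _) (maxone_prod_nonneg _)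
    have hmul : MF * MG = MP := by
      rw [hMP, hP, Polynomial.leadingCoeff_mul, norm_mul, Polynomial.roots_mul hP0,
        Multiset.map_add, Multiset.prod_add, hMF, hMG]
      ring
    -- Landau's inequality
    have hdegP : P.natDegree = n₁ + n₂ := by
      rw [hP, Polynomial.natDegree_mul hF0 hG0, hdegF, hdegG]
    have hsplitP : Polynomial.Splits P := IsAlgClosed.splits P
    have hcardP : Multiset.card P.roots = n₁ + n₂ := by
      rw [Polynomial.splits_iff_card_roots.1 hsplitP, hdegP]
    have heqP : P = C P.leadingCoeff * (P.roots.map (fun α => X - C α)).prod :=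
      hsplitP.eq_prod_roots
    have hLandau : MP^2 ≤ sq2 (n₁ + n₂ + 1) P := by
      have := landau_aux (P.roots.filter (fun α => 1 < ‖α‖)).card P.roots P.leadingCoeff rfl
      rw [hcardP, ← heqP] at this
      exact this
    -- ℓ² bound by height
    have hPmap : P = (f * g).map (Int.castRingHom ℂ) := by
      rw [hP, Polynomial.map_mul, hF, hG]
    have hsq2 : sq2 (n₁ + n₂ + 1) P ≤ ((n₁ + n₂ + 1 : ℕ) : ℝ) * ((Hnat (f * g) : ℕ) : ℝ)^2 := by
      unfold sq2
      have hb : ∀ i ∈ Finset.range (n₁ + n₂ + 1),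
          Complex.normSq (P.coeff i) ≤ ((Hnat (f * g) : ℕ) : ℝ)^2 := by
        intro i _
        rw [hPmap, Polynomial.coeff_map]
        show Complex.normSq ((((f * g).coeff i : ℤ)) : ℂ) ≤ ((Hnat (f * g) : ℕ) : ℝ)^2
        have e1 : Complex.normSq (((f * g).coeff i : ℤ) : ℂ)
            = (((((f * g).coeff i).natAbs : ℕ) : ℝ))^2 := by
          rw [← Complex.sq_norm]
          rw [Complex.norm_intCast, Nat.cast_natAbs, Int.cast_abs]
        rw [e1]
        have : ((((f * g).coeff i).natAbs : ℕ) : ℝ) ≤ ((Hnat (f * g) : ℕ) : ℝ) :=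
          Nat.cast_le.2 (coeff_natAbs_le (f * g) i)
        exact pow_le_pow_left₀ (Nat.cast_nonneg _) this 2
      calc ∑ i ∈ Finset.range (n₁ + n₂ + 1), Complex.normSq (P.coeff i)
          ≤ (Finset.range (n₁ + n₂ + 1)).card • (((Hnat (f * g) : ℕ) : ℝ)^2) :=
            Finset.sum_le_card_nsmul _ _ _ hb
        _ = ((n₁ + n₂ + 1 : ℕ) : ℝ) * ((Hnat (f * g) : ℕ) : ℝ)^2 := by
            simp [nsmul_eq_mul]
    have hMPle : MP ≤ Real.sqrt ((n₁ : ℝ) + n₂ + 1) * ((Hnat (f * g) : ℕ) : ℝ) := by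
      have h1 : MP ≤ Real.sqrt (((n₁ + n₂ + 1 : ℕ) : ℝ) * ((Hnat (f * g) : ℕ) : ℝ)^2) := by
        rw [Real.le_sqrt hMPnn (by positivity)]
        exact le_trans hLandau hsq2
      rw [Real.sqrt_mul (Nat.cast_nonneg _), Real.sqrt_sq (Nat.cast_nonneg _)] at h1
      calc MP ≤ _ := h1
        _ = Real.sqrt ((n₁ : ℝ) + n₂ + 1) * ((Hnat (f * g) : ℕ) : ℝ) := by push_cast; ring
    -- combine
    have hApos : (0:ℝ) < (2 : ℝ) ^ (n₁ + n₂ - 2) * Real.sqrt ((n₁ : ℝ) + n₂ + 1) := by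
      apply mul_pos (by positivity)
      exact Real.sqrt_pos.2 (by positivity)
    rw [ePf, ePg, ePfg, inv_mul_le_iff₀ hApos]
    have hchain : ((Hnat f : ℕ) : ℝ) * ((Hnat g : ℕ) : ℝ)
        ≤ (2:ℝ)^(n₁ + n₂ - 2) * MP := by
      calc ((Hnat f : ℕ) : ℝ) * ((Hnat g : ℕ) : ℝ)
          ≤ ((2:ℝ)^(n₁-1) * MF) * ((2:ℝ)^(n₂-1) * MG) :=
            mul_le_mul hHf hHg (Nat.cast_nonneg _) (by positivity)
        _ = ((2:ℝ)^(n₁-1) * (2:ℝ)^(n₂-1)) * (MF * MG) := by ring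
        _ = (2:ℝ)^(n₁ + n₂ - 2) * MP := by
            rw [← pow_add, hmul, show (n₁-1)+(n₂-1) = n₁+n₂-2 by omega]
    calc ((Hnat f : ℕ) : ℝ) * ((Hnat g : ℕ) : ℝ) ≤ (2:ℝ)^(n₁ + n₂ - 2) * MP := hchain
      _ ≤ (2:ℝ)^(n₁ + n₂ - 2) * (Real.sqrt ((n₁ : ℝ) + n₂ + 1) * ((Hnat (f * g) : ℕ) : ℝ)) :=
          mul_le_mul_of_nonneg_left hMPle (by positivity)
      _ = (2:ℝ)^(n₁ + n₂ - 2) * Real.sqrt ((n₁ : ℝ) + n₂ + 1) * ((Hnat (f * g) : ℕ) : ℝ) := by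
          ring
  · -- upper bound
    rcases le_total n₁ n₂ with h | h
    · rw [min_eq_left h]
      have h1 := Hnat_mul_le f g
      rw [hf] at h1
      calc polyHeight (f * g) = ((Hnat (f * g) : ℕ) : ℝ) := ePfg
        _ ≤ (((n₁ + 1) * (Hnat f * Hnat g) : ℕ) : ℝ) := Nat.cast_le.2 h1
        _ = (1 + (n₁ : ℝ)) * (polyHeight f * polyHeight g) := by
            rw [ePf, ePg]; push_cast; ring
    · rw [min_eq_right h]
      have h1 := Hnat_mul_le g f
      rw [hg] at h1
      rw [mul_comm g f] at h1
      calc polyHeight (f * g) = ((Hnat (f * g) : ℕ) : ℝ) := ePfg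
        _ ≤ (((n₂ + 1) * (Hnat g * Hnat f) : ℕ) : ℝ) := Nat.cast_le.2 h1
        _ = (1 + (n₂ : ℝ)) * (polyHeight f * polyHeight g) := by
            rw [ePf, ePg]; push_cast; ring
end

section
/- Consider the polynomial identity a_n x^n + ... + a_1 x + a_0 = (x-α)(x-β)(b_{n-2}x^{n-2} + ... + b_1 x + b_0), viewed as defining the map (b_{n-2},...,b_0,α,β) ↦ (a_n,...,a_0). Removing the coordinate a_n (which equals b_{n-2}), the Jacobian determinant of the map from (b_{n-3},...,b_0,α,β) (with b_{n-2} fixed) — equivalently, the absolute value of the Jacobian of the full map restricted appropriately — equals |α-β|·|g(α)|·|g(β)|, where g(x) = b_{n-2}x^{n-2} + ... + b_1 x + b_0. -/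
open Polynomial

/-- The polynomial `g(x) = b_{n-2} x^{n-2} + ... + b_1 x + b_0`, whose coefficients
are the first `n-1` coordinates of `w`. -/
noncomputable def gPoly (n : ℕ) (w : Fin (n + 1) → ℝ) : Polynomial ℝ :=
  ∑ j : Fin (n - 1), Polynomial.C (w (Fin.castLE (by omega) j)) * Polynomial.X ^ (j : ℕ)

/-- The coefficient map `(b_{n-2},...,b_0,α,β) ↦ (a_n,...,a_0)` given by
`a_n x^n + ... + a_0 = (x-α)(x-β) g(x)`, where `α = w (n-1)`, `β = w n`. -/
noncomputable def coeffMap (n : ℕ) (w : Fin (n + 1) → ℝ) : Fin (n + 1) → ℝ :=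
  fun i =>
    ((Polynomial.X - Polynomial.C (w ⟨n - 1, by omega⟩)) *
      (Polynomial.X - Polynomial.C (w ⟨n, by omega⟩)) * gPoly n w).coeff (i : ℕ)

/-- The Jacobian matrix of `coeffMap`. -/
noncomputable def jacMatrix (n : ℕ) (w : Fin (n + 1) → ℝ) :
    Matrix (Fin (n + 1)) (Fin (n + 1)) ℝ :=
  Matrix.of fun i j => deriv (fun t : ℝ => coeffMap n (Function.update w j t) i) (w j)

/-! ### Auxiliary matrices -/

noncomputable def Kmat (n : ℕ) (g : Polynomial ℝ) (a b : ℝ) :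
    Matrix (Fin (n + 1)) (Fin (n + 1)) ℝ :=
  Matrix.of fun i j =>
    if (j : ℕ) < n - 1 then
      (if (i : ℕ) = (j : ℕ) + 2 then (1 : ℝ) else 0)
        - (a + b) * (if (i : ℕ) = (j : ℕ) + 1 then 1 else 0)
        + a * b * (if (i : ℕ) = (j : ℕ) then 1 else 0)
    else if (j : ℕ) = n - 1 then g.coeff i
    else (Polynomial.X * g).coeff i

noncomputable def Vmat (n : ℕ) (a b : ℝ) : Matrix (Fin (n + 1)) (Fin (n + 1)) ℝ :=
  Matrix.of fun i j =>
    if (i : ℕ) < n - 1 then (if (j : ℕ) = (i : ℕ) then 1 else 0)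
    else if (i : ℕ) = n - 1 then a ^ (j : ℕ)
    else b ^ (j : ℕ)

lemma coeff_p_mul_Xpow (a b : ℝ) (j i : ℕ) :
    ((X - C a) * (X - C b) * X ^ j).coeff i =
      (if i = j + 2 then (1:ℝ) else 0) - (a + b) * (if i = j + 1 then 1 else 0)
        + a * b * (if i = j then 1 else 0) := by
  have h : (X - C a) * (X - C b) * X ^ j
      = X ^ (j + 2) - C (a + b) * X ^ (j + 1) + C (a * b) * X ^ j := by
    simp only [C_add, C_mul]; ring
  rw [h]
  simp only [coeff_add, coeff_sub, coeff_C_mul, coeff_X_pow]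

lemma natDegree_gPoly (n : ℕ) (w : Fin (n + 1) → ℝ) (hn : 2 ≤ n) :
    (gPoly n w).natDegree ≤ n - 2 := by
  refine natDegree_sum_le_of_forall_le _ _ fun j _ => ?_
  refine (natDegree_C_mul_le _ _).trans ?_
  rw [natDegree_X_pow]
  omega

lemma det_Kmat_aux (n : ℕ) (hn : 2 ≤ n) (g : Polynomial ℝ) (hg : g.natDegree ≤ n - 2)
    (a b : ℝ) :
    (a * b) ^ (n - 1) * (b - a) * ((Kmat n g a b).det - g.eval a * g.eval b) = 0 := by
  set m := n - 1 with hm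
  have hmn : m + 2 = n + 1 := by omega
  set e : Fin m ⊕ Fin 2 ≃ Fin (n + 1) := finSumFinEquiv.trans (finCongr hmn) with he
  have he1 : ∀ k : Fin m, ((e (Sum.inl k)) : ℕ) = (k : ℕ) := by
    intro k; simp [he, finCongr]
  have he2 : ∀ r : Fin 2, ((e (Sum.inr r)) : ℕ) = m + (r : ℕ) := by
    intro r; simp [he, finCongr]
  -- blocks
  set A : Matrix (Fin m) (Fin m) ℝ := Matrix.of fun k l =>
    (if (k : ℕ) = (l : ℕ) + 2 then (1 : ℝ) else 0)
      - (a + b) * (if (k : ℕ) = (l : ℕ) + 1 then 1 else 0)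
      + a * b * (if (k : ℕ) = (l : ℕ) then 1 else 0) with hA
  set B : Matrix (Fin m) (Fin 2) ℝ := Matrix.of fun k r =>
    ((Vmat n a b) * (Kmat n g a b)) (e (Sum.inl k)) (e (Sum.inr r)) with hB
  set Cm : Matrix (Fin 2) (Fin 2) ℝ :=
    !![g.eval a, a * g.eval a; g.eval b, b * g.eval b] with hC
  set D : Matrix (Fin 2) (Fin m) ℝ := Matrix.of fun r l =>
    Vmat n a b (e (Sum.inr r)) (e (Sum.inl l)) with hD
  set C' : Matrix (Fin 2) (Fin 2) ℝ :=
    !![a ^ m, a ^ (m + 1); b ^ m, b ^ (m + 1)] with hC'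
  -- V as blocks
  have hVsub : (Vmat n a b).submatrix e e = Matrix.fromBlocks 1 0 D C' := by
    ext i j
    cases i with
    | inl k =>
      cases j with
      | inl l =>
        have hk := k.isLt
        simp only [Matrix.submatrix_apply, Vmat, Matrix.of_apply, he1, ← hm,
          Matrix.fromBlocks_apply₁₁, if_pos hk, Matrix.one_apply]
        by_cases h : k = l
        · subst h; simp
        · have : (l : ℕ) ≠ (k : ℕ) := fun hc => h (Fin.ext hc.symm)
          simp [h, this]
      | inr r =>
        have hk := k.isLt
        have : ((e (Sum.inr r)) : ℕ) ≠ (k : ℕ) := by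
          rw [he2]; omega
        simp [Matrix.submatrix_apply, Vmat, he1, ← hm, hk, this]
    | inr r =>
      cases j with
      | inl l => simp [hD]
      | inr r' =>
        have h1 : ¬ ((e (Sum.inr r) : ℕ) < n - 1) := by rw [he2]; omega
        simp only [Matrix.submatrix_apply, Vmat, Matrix.of_apply, if_neg h1,
          Matrix.fromBlocks_apply₂₂, he2]
        have h3 : ¬ (m + 1 < n - 1) := by omega
        have h4 : ¬ (m + 1 = n - 1) := by omega
        have h5 : ¬ (m < n - 1) := by omega
        have h6 : m = n - 1 := hm
        fin_cases r <;> fin_cases r' <;> simp [hC', h3, h4, h5, h6]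
  have hdetV : (Vmat n a b).det = (a * b) ^ m * (b - a) := by
    rw [← Matrix.det_submatrix_equiv_self e, hVsub, Matrix.det_fromBlocks_zero₁₂,
      Matrix.det_one, one_mul, hC', Matrix.det_fin_two_of, pow_succ, pow_succ, mul_pow]
    ring
  -- row lemmas for V*K
  have hrowtop : ∀ (i j : Fin (n + 1)), (i : ℕ) < n - 1 →
      ((Vmat n a b) * (Kmat n g a b)) i j = Kmat n g a b i j := by
    intro i j hi
    rw [Matrix.mul_apply, Finset.sum_eq_single i]
    · simp [Vmat, hi]
    · intro l _ hl
      have : (l : ℕ) ≠ (i : ℕ) := fun h => hl (Fin.ext h)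
      simp [Vmat, hi, this]
    · simp
  have heval : ∀ (c : ℝ) (q : Polynomial ℝ), q.natDegree < n + 1 →
      ∑ l : Fin (n + 1), c ^ (l : ℕ) * q.coeff (l : ℕ) = q.eval c := by
    intro c q hq
    rw [Fin.sum_univ_eq_sum_range (fun l => c ^ l * q.coeff l), eval_eq_sum_range' hq]
    exact Finset.sum_congr rfl fun i _ => mul_comm _ _
  have hcol0 : ∀ (c : ℝ) (j : Fin (n + 1)), (j : ℕ) < n - 1 →
      ∑ l : Fin (n + 1), c ^ (l : ℕ) * Kmat n g a b l j
        = c ^ ((j : ℕ) + 2) - (a + b) * c ^ ((j : ℕ) + 1) + a * b * c ^ (j : ℕ) := by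
    intro c j hj
    have h1 : ∀ l : Fin (n + 1), c ^ (l : ℕ) * Kmat n g a b l j
        = (fun l : ℕ => c ^ l * ((if l = (j : ℕ) + 2 then (1 : ℝ) else 0)
            - (a + b) * (if l = (j : ℕ) + 1 then 1 else 0)
            + a * b * (if l = (j : ℕ) then 1 else 0))) (l : ℕ) := by
      intro l; simp [Kmat, hj]
    rw [Finset.sum_congr rfl fun l _ => h1 l,
      Fin.sum_univ_eq_sum_range (fun l : ℕ => c ^ l * ((if l = (j : ℕ) + 2 then (1 : ℝ) else 0)
            - (a + b) * (if l = (j : ℕ) + 1 then 1 else 0)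
            + a * b * (if l = (j : ℕ) then 1 else 0))) (n + 1)]
    have h2 : (j : ℕ) + 2 ∈ Finset.range (n + 1) := by
      simp only [Finset.mem_range]; omega
    have h3 : (j : ℕ) + 1 ∈ Finset.range (n + 1) := by
      simp only [Finset.mem_range]; omega
    have h4 : (j : ℕ) ∈ Finset.range (n + 1) := by
      simp only [Finset.mem_range]; omega
    simp only [mul_sub, mul_add, Finset.sum_sub_distrib, Finset.sum_add_distrib,
      mul_ite, mul_one, mul_zero, Finset.sum_ite_eq', h2, h3, h4, if_pos]
    ring
  have hgdeg : g.natDegree < n + 1 := by omega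
  have hXg : (X * g).natDegree < n + 1 := by
    have h := natDegree_mul_le (p := (X : Polynomial ℝ)) (q := g)
    rw [natDegree_X] at h
    omega
  have hVrow : ∀ (r : Fin 2) (j : Fin (n + 1)),
      ((Vmat n a b) * (Kmat n g a b)) (e (Sum.inr r)) j
        = ∑ l : Fin (n + 1), (if (r : ℕ) = 0 then a else b) ^ (l : ℕ) * Kmat n g a b l j := by
    intro r j
    rw [Matrix.mul_apply]
    refine Finset.sum_congr rfl fun l _ => ?_
    have h1 : ¬ ((e (Sum.inr r) : ℕ) < n - 1) := by rw [he2]; omega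
    have h2 : ((e (Sum.inr r)) : ℕ) = n - 1 ↔ (r : ℕ) = 0 := by rw [he2]; omega
    simp only [Vmat, Matrix.of_apply, if_neg h1]
    by_cases hr : (r : ℕ) = 0
    · rw [if_pos (h2.mpr hr), if_pos hr]
    · rw [if_neg (fun hc => hr (h2.mp hc)), if_neg hr]
  have hcolg : ∀ c : ℝ,
      ∑ l : Fin (n + 1), c ^ (l : ℕ) * Kmat n g a b l (e (Sum.inr 0)) = g.eval c := by
    intro c
    have h0 : ((e (Sum.inr 0)) : ℕ) = n - 1 := by rw [he2]; omega
    have h1 : ∀ l : Fin (n + 1), Kmat n g a b l (e (Sum.inr 0)) = g.coeff (l : ℕ) := by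
      intro l
      simp only [Kmat, Matrix.of_apply, h0]
      simp
    rw [Finset.sum_congr rfl fun l _ => by rw [h1 l]]
    exact heval c g hgdeg
  have hcolXg : ∀ c : ℝ,
      ∑ l : Fin (n + 1), c ^ (l : ℕ) * Kmat n g a b l (e (Sum.inr 1)) = c * g.eval c := by
    intro c
    have h0 : ((e (Sum.inr 1)) : ℕ) = n := by rw [he2]; omega
    have h1 : ∀ l : Fin (n + 1), Kmat n g a b l (e (Sum.inr 1)) = (X * g).coeff (l : ℕ) := by
      intro l
      simp only [Kmat, Matrix.of_apply, h0]
      rw [if_neg (by omega), if_neg (by omega)]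
    rw [Finset.sum_congr rfl fun l _ => by rw [h1 l], heval c _ hXg, eval_mul, eval_X]
  have hVKsub : ((Vmat n a b) * (Kmat n g a b)).submatrix e e
      = Matrix.fromBlocks A B 0 Cm := by
    ext i j
    cases i with
    | inl k =>
      cases j with
      | inl l =>
        have hk : ((e (Sum.inl k)) : ℕ) < n - 1 := by rw [he1]; omega
        have hl : ((e (Sum.inl l)) : ℕ) < n - 1 := by rw [he1]; omega
        rw [Matrix.submatrix_apply, hrowtop _ _ hk]
        have hl' : (l : ℕ) < n - 1 := (he1 l) ▸ hl
        have hl'' : ¬ (n ≤ (l : ℕ) + 1) := by omega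
        simp [Kmat, hA, hl, he1, hl', hl'']
      | inr r => rfl
    | inr r =>
      cases j with
      | inl l =>
        have hl : ((e (Sum.inl l)) : ℕ) < n - 1 := by rw [he1]; omega
        rw [Matrix.submatrix_apply, hVrow, hcol0 _ _ hl]
        have : (Matrix.fromBlocks A B 0 Cm) (Sum.inr r) (Sum.inl l) = 0 := by
          simp
        rw [this]
        split_ifs <;> ring
      | inr r' =>
        rw [Matrix.submatrix_apply, hVrow]
        fin_cases r <;> fin_cases r' <;>
          simp only [Fin.isValue, Fin.val_zero, Fin.val_one, if_true, if_false,
            reduceIte, Matrix.fromBlocks_apply₂₂, hC] <;>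
          first
            | simpa using hcolg a
            | simpa using hcolg b
            | simpa using hcolXg a
            | simpa using hcolXg b
  have hdetA : A.det = (a * b) ^ m := by
    have htri : A.BlockTriangular OrderDual.toDual := by
      intro k l h
      have hkl : (k : ℕ) < (l : ℕ) := h
      simp only [hA, Matrix.of_apply]
      rw [if_neg (by omega), if_neg (by omega), if_neg (by omega)]
      ring
    rw [Matrix.det_of_lowerTriangular A htri]
    have hdiag : ∀ k : Fin m, A k k = a * b := by
      intro k
      simp [hA]
    rw [Finset.prod_congr rfl fun k _ => hdiag k, Finset.prod_const]
    simp [Finset.card_univ]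
  have hdetVK : ((Vmat n a b) * (Kmat n g a b)).det
      = (a * b) ^ m * (g.eval a * (b * g.eval b) - a * g.eval a * g.eval b) := by
    rw [← Matrix.det_submatrix_equiv_self e, hVKsub, Matrix.det_fromBlocks_zero₂₁,
      hdetA, hC, Matrix.det_fin_two_of]
  rw [Matrix.det_mul, hdetV] at hdetVK
  linear_combination hdetVK

lemma det_Kmat (n : ℕ) (hn : 2 ≤ n) (g : Polynomial ℝ) (hg : g.natDegree ≤ n - 2)
    (a b : ℝ) :
    (Kmat n g a b).det = g.eval a * g.eval b := by
  have key : ∀ x y : ℝ, x ≠ 0 → y ≠ 0 → x ≠ y →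
      (Kmat n g x y).det = g.eval x * g.eval y := by
    intro x y hx hy hxy
    have h := det_Kmat_aux n hn g hg x y
    have h1 : (x * y) ^ (n - 1) * (y - x) ≠ 0 :=
      mul_ne_zero (pow_ne_zero _ (mul_ne_zero hx hy)) (sub_ne_zero.mpr (Ne.symm hxy))
    have h2 := (mul_eq_zero.mp h).resolve_left h1
    linarith [h2]
  set φ : ℝ → ℝ := fun ε =>
    (Kmat n g (a + ε) (b + 2 * ε)).det - g.eval (a + ε) * g.eval (b + 2 * ε) with hφ
  have hcont : Continuous φ := by
    apply Continuous.sub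
    · apply Continuous.matrix_det
      apply continuous_matrix
      intro i j
      simp only [Kmat, Matrix.of_apply]
      split_ifs <;> fun_prop
    · exact (g.continuous.comp (by fun_prop)).mul (g.continuous.comp (by fun_prop))
  have hne : ∀ s : ℝ, ∀ᶠ ε in nhdsWithin (0 : ℝ) {0}ᶜ, ε ≠ s := by
    intro s
    rcases eq_or_ne s 0 with rfl | hs
    · filter_upwards [eventually_mem_nhdsWithin] with ε hε using hε
    · exact eventually_nhdsWithin_of_eventually_nhds (eventually_ne_nhds hs.symm)
  have hev : ∀ᶠ ε in nhdsWithin (0 : ℝ) {0}ᶜ, φ ε = 0 := by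
    filter_upwards [hne (-a), hne (-(b / 2)), hne (a - b)] with ε h1 h2 h3
    have hx : a + ε ≠ 0 := fun hc => h1 (by linarith)
    have hy : b + 2 * ε ≠ 0 := fun hc => h2 (by linarith)
    have hxy : a + ε ≠ b + 2 * ε := fun hc => h3 (by linarith)
    simp only [hφ]
    rw [key _ _ hx hy hxy, sub_self]
  have h0 : φ 0 = 0 := by
    have h1 : Filter.Tendsto φ (nhdsWithin 0 {0}ᶜ) (nhds (φ 0)) :=
      (hcont.tendsto 0).mono_left nhdsWithin_le_nhds
    have h2 : Filter.Tendsto φ (nhdsWithin 0 {0}ᶜ) (nhds 0) :=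
      Filter.Tendsto.congr' (hev.mono fun x hx => hx.symm) tendsto_const_nhds
    exact tendsto_nhds_unique h1 h2
  simp only [hφ] at h0
  norm_num at h0
  linarith [h0]

lemma jac_det (n : ℕ) (hn : 2 ≤ n) (w : Fin (n + 1) → ℝ) :
    (jacMatrix n w).det =
      (w ⟨n - 1, by clear hn; omega⟩ - w ⟨n, by clear hn; omega⟩) *
        (Kmat n (gPoly n w) (w ⟨n - 1, by clear hn; omega⟩) (w ⟨n, by clear hn; omega⟩)).det := by
  set α : ℝ := w ⟨n - 1, by omega⟩ with hα
  set β : ℝ := w ⟨n, by omega⟩ with hβ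
  set g : Polynomial ℝ := gPoly n w with hg
  set M : Matrix (Fin (n + 1)) (Fin (n + 1)) ℝ := Matrix.of fun i j =>
    if (j : ℕ) < n - 1 then ((X - C α) * (X - C β) * X ^ (j : ℕ)).coeff (i : ℕ)
    else if (j : ℕ) = n - 1 then -(((X - C β) * g).coeff (i : ℕ))
    else -(((X - C α) * g).coeff (i : ℕ)) with hM
  have hJ : jacMatrix n w = M := by
    ext i j
    simp only [jacMatrix, Matrix.of_apply, hM]
    by_cases hj : (j : ℕ) < n - 1
    · -- column of a `b`-coordinate
      have hup1 : ∀ t : ℝ, Function.update w j t ⟨n - 1, by omega⟩ = α := by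
        intro t
        rw [Function.update_apply, if_neg (by simp [Fin.ext_iff]; omega)]
      have hup2 : ∀ t : ℝ, Function.update w j t ⟨n, by omega⟩ = β := by
        intro t
        rw [Function.update_apply, if_neg (by simp [Fin.ext_iff]; omega)]
      have hupg : ∀ t : ℝ,
          gPoly n (Function.update w j t) = g + C (t - w j) * X ^ (j : ℕ) := by
        intro t
        have step : ∀ k : Fin (n - 1),
            C (Function.update w j t (Fin.castLE (by omega) k)) * X ^ (k : ℕ)
              = C (w (Fin.castLE (by omega) k)) * X ^ (k : ℕ)
                + (if k = ⟨(j : ℕ), hj⟩ then C (t - w j) * X ^ (j : ℕ) else 0) := by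
          intro k
          rcases eq_or_ne k ⟨(j : ℕ), hj⟩ with rfl | hk
          · have hc : Fin.castLE (by omega : n - 1 ≤ n + 1) (⟨(j : ℕ), hj⟩ : Fin (n - 1)) = j :=
              Fin.ext rfl
            rw [hc, if_pos rfl, Function.update_self, ← add_mul, ← C_add]
            congr 2
            ring
          · have hc : Fin.castLE (by omega : n - 1 ≤ n + 1) k ≠ j := by
              intro hcc
              exact hk (Fin.ext (by simpa using congrArg Fin.val hcc))
            rw [Function.update_of_ne hc, if_neg hk, add_zero]
        unfold gPoly
        rw [Finset.sum_congr rfl fun k _ => step k, Finset.sum_add_distrib,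
          Finset.sum_ite_eq' Finset.univ, if_pos (Finset.mem_univ _)]
        rfl
      have hfun : (fun t : ℝ => coeffMap n (Function.update w j t) i)
          = fun t : ℝ => ((X - C α) * (X - C β) * g).coeff (i : ℕ)
              + (t - w j) * (((X - C α) * (X - C β) * X ^ (j : ℕ)).coeff (i : ℕ)) := by
        funext t
        simp only [coeffMap, hupg t, hup1 t, hup2 t]
        rw [mul_add]
        have hc : (X - C α) * (X - C β) * (C (t - w j) * X ^ (j : ℕ))
            = C (t - w j) * ((X - C α) * (X - C β) * X ^ (j : ℕ)) := by ring
        rw [hc, coeff_add, coeff_C_mul]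
      rw [hfun, if_pos hj]
      have hd : HasDerivAt (fun t : ℝ => ((X - C α) * (X - C β) * g).coeff (i : ℕ)
          + (t - w j) * (((X - C α) * (X - C β) * X ^ (j : ℕ)).coeff (i : ℕ)))
          (((X - C α) * (X - C β) * X ^ (j : ℕ)).coeff (i : ℕ)) (w j) := by
        simpa using (((hasDerivAt_id (w j)).sub_const (w j)).mul_const
          (((X - C α) * (X - C β) * X ^ (j : ℕ)).coeff (i : ℕ))).const_add
          (((X - C α) * (X - C β) * g).coeff (i : ℕ))
      exact hd.deriv
    · have hupg0 : ∀ (t : ℝ) (j' : Fin (n + 1)), ¬ ((j' : ℕ) < n - 1) →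
          gPoly n (Function.update w j' t) = g := by
        intro t j' hj'
        unfold gPoly
        refine Finset.sum_congr rfl fun k _ => ?_
        have hc : Fin.castLE (by omega : n - 1 ≤ n + 1) k ≠ j' := by
          intro hcc
          have := congrArg Fin.val hcc
          simp only [Fin.coe_castLE] at this
          omega
        rw [Function.update_of_ne hc]
      by_cases hj2 : (j : ℕ) = n - 1
      · -- column of α
        have hjeq : j = ⟨n - 1, by omega⟩ := Fin.ext hj2
        have hupα : ∀ t : ℝ, Function.update w j t ⟨n - 1, by omega⟩ = t := by
          intro t
          rw [Function.update_apply, if_pos hjeq.symm]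
        have hupβ : ∀ t : ℝ, Function.update w j t ⟨n, by omega⟩ = β := by
          intro t
          rw [Function.update_apply, if_neg (by simp [Fin.ext_iff]; omega)]
        have hfun : (fun t : ℝ => coeffMap n (Function.update w j t) i)
            = fun t : ℝ => (X * ((X - C β) * g)).coeff (i : ℕ)
                - t * (((X - C β) * g).coeff (i : ℕ)) := by
          funext t
          simp only [coeffMap, hupg0 t j hj, hupα t, hupβ t]
          have hc : (X - C t) * (X - C β) * g
              = X * ((X - C β) * g) - C t * ((X - C β) * g) := by ring
          rw [hc, coeff_sub, coeff_C_mul]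
        rw [hfun, if_neg hj, if_pos hj2]
        have hd : HasDerivAt (fun t : ℝ => (X * ((X - C β) * g)).coeff (i : ℕ)
            - t * (((X - C β) * g).coeff (i : ℕ)))
            (-(((X - C β) * g).coeff (i : ℕ))) (w j) := by
          simpa using ((hasDerivAt_id (w j)).mul_const
            (((X - C β) * g).coeff (i : ℕ))).const_sub
            ((X * ((X - C β) * g)).coeff (i : ℕ))
        exact hd.deriv
      · -- column of β
        have hj3 : (j : ℕ) = n := by have := j.isLt; omega
        have hjeq : j = ⟨n, by omega⟩ := Fin.ext hj3
        have hupβ : ∀ t : ℝ, Function.update w j t ⟨n, by omega⟩ = t := by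
          intro t
          rw [Function.update_apply, if_pos hjeq.symm]
        have hupα : ∀ t : ℝ, Function.update w j t ⟨n - 1, by omega⟩ = α := by
          intro t
          rw [Function.update_apply, if_neg (by simp [Fin.ext_iff]; omega)]
        have hfun : (fun t : ℝ => coeffMap n (Function.update w j t) i)
            = fun t : ℝ => (X * ((X - C α) * g)).coeff (i : ℕ)
                - t * (((X - C α) * g).coeff (i : ℕ)) := by
          funext t
          simp only [coeffMap, hupg0 t j hj, hupα t, hupβ t]
          have hc : (X - C α) * (X - C t) * g
              = X * ((X - C α) * g) - C t * ((X - C α) * g) := by ring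
          rw [hc, coeff_sub, coeff_C_mul]
        rw [hfun, if_neg hj, if_neg hj2]
        have hd : HasDerivAt (fun t : ℝ => (X * ((X - C α) * g)).coeff (i : ℕ)
            - t * (((X - C α) * g).coeff (i : ℕ)))
            (-(((X - C α) * g).coeff (i : ℕ))) (w j) := by
          simpa using ((hasDerivAt_id (w j)).mul_const
            (((X - C α) * g).coeff (i : ℕ))).const_sub
            ((X * ((X - C α) * g)).coeff (i : ℕ))
        exact hd.deriv
  rw [hJ]
  set jn1 : Fin (n + 1) := ⟨n - 1, by omega⟩ with hjn1
  set jn : Fin (n + 1) := ⟨n, by omega⟩ with hjn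
  have hv1 : (jn1 : ℕ) = n - 1 := rfl
  have hv2 : (jn : ℕ) = n := rfl
  have hne : jn1 ≠ jn := Fin.ne_of_val_ne (by rw [hv1, hv2]; omega)
  set colg : Fin (n + 1) → ℝ := fun k => g.coeff (k : ℕ) with hcolg
  set colXg : Fin (n + 1) → ℝ := fun k => (X * g).coeff (k : ℕ) with hcolXg
  have hcol1 : ∀ i : Fin (n + 1), M i jn1 = -(((X - C β) * g).coeff (i : ℕ)) := by
    intro i
    simp only [hM, Matrix.of_apply, hv1]
    rw [if_neg (show ¬ (n - 1 < n - 1) by omega)]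
    simp
  have hcol2 : ∀ i : Fin (n + 1), M i jn = -(((X - C α) * g).coeff (i : ℕ)) := by
    intro i
    simp only [hM, Matrix.of_apply, hv2]
    rw [if_neg (show ¬ (n < n - 1) by omega), if_neg (show ¬ (n = n - 1) by omega)]
  have s1 : M.det = (M.updateCol jn1 (fun k => M k jn1 + (-1 : ℝ) • M k jn)).det :=
    (Matrix.det_updateCol_add_smul_self M hne (-1)).symm
  have e1 : M.updateCol jn1 (fun k => M k jn1 + (-1 : ℝ) • M k jn)
      = M.updateCol jn1 ((β - α) • colg) := by
    refine congrArg _ (funext fun k => ?_)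
    rw [hcol1 k, hcol2 k]
    have hpoly : (X - C α) * g - (X - C β) * g = C (β - α) * g := by
      rw [C_sub]; ring
    have := congrArg (fun p : Polynomial ℝ => p.coeff (k : ℕ)) hpoly
    simp only [coeff_sub, coeff_C_mul] at this
    simp only [Pi.smul_apply, smul_eq_mul, hcolg]
    linarith [this]
  set M2 : Matrix (Fin (n + 1)) (Fin (n + 1)) ℝ :=
    M.updateCol jn1 colg with hM2
  have s2 : M.det = (β - α) * M2.det := by
    rw [s1, e1, Matrix.det_updateCol_smul]
  have hM2col1 : ∀ k : Fin (n + 1), M2 k jn1 = g.coeff (k : ℕ) := by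
    intro k
    simp [hM2, Matrix.updateCol_apply, hcolg]
  have hM2col2 : ∀ k : Fin (n + 1), M2 k jn = -(((X - C α) * g).coeff (k : ℕ)) := by
    intro k
    simp only [hM2, Matrix.updateCol_apply, if_neg hne.symm]
    exact hcol2 k
  have s3 : M2.det = (M2.updateCol jn (fun k => M2 k jn + (-α : ℝ) • M2 k jn1)).det :=
    (Matrix.det_updateCol_add_smul_self M2 hne.symm (-α)).symm
  have e2 : M2.updateCol jn (fun k => M2 k jn + (-α : ℝ) • M2 k jn1)
      = M2.updateCol jn ((-1 : ℝ) • colXg) := by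
    refine congrArg _ (funext fun k => ?_)
    rw [hM2col1 k, hM2col2 k]
    have hpoly : (X - C α) * g + C α * g = X * g := by ring
    have := congrArg (fun p : Polynomial ℝ => p.coeff (k : ℕ)) hpoly
    simp only [coeff_add, coeff_C_mul] at this
    simp only [Pi.smul_apply, smul_eq_mul, hcolXg]
    linarith [this]
  set M4 : Matrix (Fin (n + 1)) (Fin (n + 1)) ℝ :=
    M2.updateCol jn colXg with hM4
  have s4 : M2.det = (-1 : ℝ) * M4.det := by
    rw [s3, e2, Matrix.det_updateCol_smul]
  have hK : M4 = Kmat n g α β := by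
    ext k l
    by_cases hl1 : (l : ℕ) < n - 1
    · have hl1' : l ≠ jn := Fin.ne_of_val_ne (by rw [hv2]; omega)
      have hl2' : l ≠ jn1 := Fin.ne_of_val_ne (by rw [hv1]; omega)
      simp only [hM4, hM2, Matrix.updateCol_apply, if_neg hl1', if_neg hl2']
      simp only [hM, Matrix.of_apply, if_pos hl1, Kmat]
      rw [coeff_p_mul_Xpow]
    · by_cases hl2 : (l : ℕ) = n - 1
      · have hl1' : l ≠ jn := Fin.ne_of_val_ne (by rw [hv2]; omega)
        have hl2' : l = jn1 := Fin.ext (by rw [hv1]; omega)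
        simp only [hM4, hM2, Matrix.updateCol_apply, if_neg hl1', if_pos hl2']
        simp only [Kmat, Matrix.of_apply]
        rw [if_neg hl1, if_pos hl2]
      · have hl1' : l = jn := Fin.ext (by rw [hv2]; have := l.isLt; omega)
        simp only [hM4, Matrix.updateCol_apply, if_pos hl1']
        simp only [Kmat, Matrix.of_apply]
        rw [if_neg hl1, if_neg hl2]
  rw [s2, s4, hK]
  ring

theorem jacobian_det_eq (n : ℕ) (hn : 2 ≤ n) (w : Fin (n + 1) → ℝ) :
    |(jacMatrix n w).det| =
      |w ⟨n - 1, by omega⟩ - w ⟨n, by omega⟩| *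
        |Polynomial.eval (w ⟨n - 1, by omega⟩) (gPoly n w)| *
        |Polynomial.eval (w ⟨n, by omega⟩) (gPoly n w)| := by
  rw [jac_det n hn w, det_Kmat n hn (gPoly n w) (natDegree_gPoly n w hn), abs_mul, abs_mul]
  ring
end

section
/- For n ≥ 1 and t with |t| ≤ t₁(n), where t₁(n) is the positive solution of n t^{n-1} + (n-1)t^{n-2} + ... + 2t = 1 (take t₁(1) = 1/√2 or any bound ensuring the stated inequalities), the counting density φ_n(t) = ∫_{Δ_n(t)} |Σ_{k=1}^n k p_k t^{k-1}| dp₁...dp_n, where Δ_n(t) = {(p₁,...,p_n) : max|p_i| ≤ 1, |Σ_{k=1}^n p_k t^k| ≤ 1}, equals the explicit polynomial φ_n(t) = (2^{n-1}/3)·(3 + Σ_{k=1}^{n-1} (k+1)² t^{2k}). -/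
/-- The region `Δ_n(t) = {(p₁,...,p_n) : max|p_i| ≤ 1, |Σ_{k=1}^n p_k t^k| ≤ 1}`,
with index `i : Fin n` representing `p_{i+1}`. -/
def DeltaN (n : ℕ) (t : ℝ) : Set (Fin n → ℝ) :=
  {p | (∀ i, |p i| ≤ 1) ∧ |∑ k : Fin n, p k * t ^ ((k : ℕ) + 1)| ≤ 1}

/-- The counting density `φ_n(t) = ∫_{Δ_n(t)} |Σ_{k=1}^n k p_k t^{k-1}| dp₁...dp_n`. -/
noncomputable def phiN (n : ℕ) (t : ℝ) : ℝ :=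
  ∫ p in DeltaN n t, |∑ k : Fin n, ((k : ℕ) + 1 : ℝ) * p k * t ^ (k : ℕ)|

open MeasureTheory Set intervalIntegral

noncomputable abbrev cubeN (m : ℕ) : Set (Fin m → ℝ) := Set.pi Set.univ (fun _ => Set.Icc (-1:ℝ) 1)

lemma cube_compact (m : ℕ) : IsCompact (cubeN m) := isCompact_univ_pi (fun _ => isCompact_Icc)

lemma cube_volume (m : ℕ) : (volume (cubeN m)).toReal = 2^m := by
  rw [volume_pi, Measure.pi_pi]
  simp [Real.volume_Icc]
  norm_num
lemma peel (m : ℕ) (g : ℝ × (Fin m → ℝ) → ℝ) (hg : Continuous g) :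
    ∫ p in cubeN (m+1), g (p 0, fun j => p (Fin.succ j)) =
      ∫ q in cubeN m, ∫ x in Set.Icc (-1:ℝ) 1, g (x, q) := by
  set e := MeasurableEquiv.piFinSuccAbove (fun _ : Fin (m+1) => ℝ) 0 with he
  have hmp := volume_preserving_piFinSuccAbove (fun _ : Fin (m+1) => ℝ) 0
  have hpre : e ⁻¹' (Set.Icc (-1:ℝ) 1 ×ˢ cubeN m) = cubeN (m+1) := by
    ext p
    simp only [he, MeasurableEquiv.piFinSuccAbove_apply, Set.mem_preimage, Set.mem_prod,
      Set.mem_pi, Set.mem_univ, forall_true_left, cubeN, Fin.zero_succAbove]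
    constructor
    · rintro ⟨h0, hs⟩ i
      exact Fin.cases h0 (fun j => hs j) i
    · intro h; exact ⟨h 0, fun j => h j.succ⟩
  have key := hmp.setIntegral_preimage_emb (e.measurableEmbedding) g
      (Set.Icc (-1:ℝ) 1 ×ˢ cubeN m)
  rw [hpre] at key
  have : (fun p : Fin (m+1) → ℝ => g (e p)) = fun p => g (p 0, fun j => p (Fin.succ j)) := by
    funext p
    simp only [he, MeasurableEquiv.piFinSuccAbove_apply, Fin.zero_succAbove]
    rfl
  rw [this] at key
  have hint : IntegrableOn g (Set.Icc (-1:ℝ) 1 ×ˢ cubeN m) ((volume : Measure ℝ).prod volume) := by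
    rw [← Measure.volume_eq_prod]
    exact hg.continuousOn.integrableOn_compact (isCompact_Icc.prod (cube_compact m))
  rw [key, Measure.volume_eq_prod, setIntegral_prod _ hint]
  exact integral_integral_swap (by rwa [Measure.prod_restrict])
lemma oneD_abs (c : ℝ) (hc : |c| ≤ 1) :
    ∫ x in Set.Icc (-1:ℝ) 1, |x + c| = 1 + c^2 := by
  rw [MeasureTheory.integral_Icc_eq_integral_Ioc,
    ← intervalIntegral.integral_of_le (by norm_num : (-1:ℝ) ≤ 1)]
  obtain ⟨hc1, hc2⟩ := abs_le.mp hc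
  have h1 : (-1:ℝ) ≤ -c := by linarith
  have h2 : (-c:ℝ) ≤ 1 := by linarith
  have i1 : IntervalIntegrable (fun x => |x + c|) volume (-1) (-c) :=
    (continuous_abs.comp (by continuity)).intervalIntegrable _ _
  have i2 : IntervalIntegrable (fun x => |x + c|) volume (-c) 1 :=
    (continuous_abs.comp (by continuity)).intervalIntegrable _ _
  rw [← intervalIntegral.integral_add_adjacent_intervals i1 i2]
  have e1 : ∫ x in (-1:ℝ)..(-c), |x + c| = ∫ x in (-1:ℝ)..(-c), -(x + c) := by
    apply intervalIntegral.integral_congr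
    intro x hx
    rw [Set.uIcc_of_le h1] at hx
    exact abs_of_nonpos (by linarith [hx.2])
  have e2 : ∫ x in (-c:ℝ)..1, |x + c| = ∫ x in (-c:ℝ)..1, (x + c) := by
    apply intervalIntegral.integral_congr
    intro x hx
    rw [Set.uIcc_of_le h2] at hx
    exact abs_of_nonneg (by linarith [hx.1])
  rw [e1, e2]
  have j1 : ∀ a b : ℝ, (∫ x in a..b, (x + c)) = (b^2 - a^2)/2 + c*(b-a) := by
    intro a b
    rw [intervalIntegral.integral_add (intervalIntegral.intervalIntegrable_id)
      (intervalIntegrable_const), integral_id, intervalIntegral.integral_const, smul_eq_mul]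
    ring
  rw [intervalIntegral.integral_neg, j1, j1]
  ring

lemma oneD_sq (b c : ℝ) :
    ∫ x in Set.Icc (-1:ℝ) 1, (b * x + c)^2 = 2/3 * b^2 + 2 * c^2 := by
  rw [MeasureTheory.integral_Icc_eq_integral_Ioc,
    ← intervalIntegral.integral_of_le (by norm_num : (-1:ℝ) ≤ 1)]
  have : ∀ x : ℝ, (b * x + c)^2 = b^2 * x^2 + (2*b*c) * x + c^2 := by intro x; ring
  simp_rw [this]
  rw [intervalIntegral.integral_add (by apply Continuous.intervalIntegrable; continuity)
    intervalIntegrable_const,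
    intervalIntegral.integral_add (by apply Continuous.intervalIntegrable; continuity)
    (by apply Continuous.intervalIntegrable; continuity),
    intervalIntegral.integral_const_mul, intervalIntegral.integral_const_mul,
    integral_id, integral_pow, intervalIntegral.integral_const]
  norm_num
  ring
lemma sq_int : ∀ (m : ℕ) (b : Fin m → ℝ),
    ∫ q in cubeN m, (∑ k, b k * q k)^2 = 2^m/3 * ∑ k, (b k)^2 := by
  intro m
  induction m with
  | zero => intro b; simp
  | succ m ih =>
    intro b
    set g : ℝ × (Fin m → ℝ) → ℝ :=
      fun z => (b 0 * z.1 + ∑ j : Fin m, b j.succ * z.2 j)^2 with hg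
    have hsum : (fun p : Fin (m+1) → ℝ => (∑ k, b k * p k)^2) =
        fun p => g (p 0, fun j => p (Fin.succ j)) := by
      funext p; simp only [hg, Fin.sum_univ_succ]
    rw [show (∫ q in cubeN (m+1), (∑ k, b k * q k)^2) =
        ∫ p in cubeN (m+1), g (p 0, fun j => p (Fin.succ j)) from by rw [← hsum],
      peel m g (by
        simp only [hg]
        exact ((continuous_const.mul continuous_fst).add
          (continuous_finset_sum _ fun j _ =>
            continuous_const.mul ((continuous_apply j).comp continuous_snd))).pow 2)]
    simp only [hg]
    have hin : ∀ q : Fin m → ℝ,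
        (∫ x in Set.Icc (-1:ℝ) 1, (b 0 * x + ∑ j : Fin m, b j.succ * q j)^2)
          = 2/3 * (b 0)^2 + 2 * (∑ j : Fin m, b j.succ * q j)^2 := fun q => oneD_sq _ _
    simp_rw [hin]
    have hints : IntegrableOn (fun q : Fin m → ℝ => (∑ j : Fin m, b j.succ * q j)^2)
        (cubeN m) volume :=
      Continuous.continuousOn ((continuous_finset_sum _ fun j _ =>
        continuous_const.mul (continuous_apply j)).pow 2) |>.integrableOn_compact (cube_compact m)
    rw [integral_add ((integrableOn_const_iff (C := (2/3 * (b 0)^2 : ℝ))).mpr (Or.inr ((cube_compact m).measure_lt_top)))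
      (hints.const_mul 2), setIntegral_const, MeasureTheory.integral_const_mul, ih]
    simp only [smul_eq_mul, measureReal_def, cube_volume, Fin.sum_univ_succ]
    ring

theorem phiN_explicit_small_t (n : ℕ) (hn : 1 ≤ n) (t : ℝ)
    (ht0 : ∑ k ∈ Finset.Icc 1 n, |t| ^ k ≤ 1)
    (ht1 : ∑ k ∈ Finset.Icc 2 n, (k : ℝ) * |t| ^ (k - 1) ≤ 1) :
    phiN n t = 2 ^ (n - 1) / 3 *
      (3 + ∑ k ∈ Finset.Icc 1 (n - 1), ((k : ℝ) + 1) ^ 2 * t ^ (2 * k)) := by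
  obtain ⟨m, rfl⟩ : ∃ m, n = m + 1 := ⟨n - 1, (Nat.succ_pred_eq_of_pos hn).symm⟩
  -- rewrite hypotheses as range sums
  rw [← Finset.Ico_add_one_right_eq_Icc, Finset.sum_Ico_eq_sum_range] at ht0 ht1
  rw [show m + 1 + 1 - 1 = m + 1 by omega] at ht0
  rw [show m + 1 + 1 - 2 = m by omega] at ht1
  have ht1' : ∑ i ∈ Finset.range m, ((i:ℝ) + 2) * |t| ^ (i + 1) ≤ 1 := by
    refine le_trans (le_of_eq (Finset.sum_congr rfl fun i _ => ?_)) ht1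
    rw [show 2 + i - 1 = i + 1 by omega]
    push_cast
    ring
  -- Delta = cube
  have hDelta : DeltaN (m+1) t = cubeN (m+1) := by
    ext p
    simp only [DeltaN, cubeN, Set.mem_setOf_eq, Set.mem_pi, Set.mem_univ, forall_true_left,
      Set.mem_Icc]
    constructor
    · rintro ⟨h1, _⟩ i; exact abs_le.mp (h1 i)
    · intro h
      have h1 : ∀ i, |p i| ≤ 1 := fun i => abs_le.mpr (h i)
      refine ⟨h1, ?_⟩
      calc |∑ k : Fin (m+1), p k * t ^ ((k:ℕ)+1)|
          ≤ ∑ k : Fin (m+1), |p k * t ^ ((k:ℕ)+1)| := Finset.abs_sum_le_sum_abs _ _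
        _ ≤ ∑ k : Fin (m+1), |t| ^ ((k:ℕ)+1) := by
            refine Finset.sum_le_sum fun k _ => ?_
            rw [abs_mul, abs_pow]
            exact mul_le_of_le_one_left (pow_nonneg (abs_nonneg t) _) (h1 k)
        _ = ∑ i ∈ Finset.range (m+1), |t| ^ (1 + i) := by
            rw [Fin.sum_univ_eq_sum_range (fun i => |t| ^ (i+1)) (m+1)]
            exact Finset.sum_congr rfl fun i _ => by rw [add_comm]
        _ ≤ 1 := ht0
  unfold phiN
  rw [hDelta]
  set g : ℝ × (Fin m → ℝ) → ℝ :=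
    fun z => |z.1 + ∑ j : Fin m, (((j:ℕ):ℝ) + 2) * t ^ ((j:ℕ)+1) * z.2 j| with hg
  have hsum : (fun p : Fin (m+1) → ℝ =>
        |∑ k : Fin (m+1), (((k:ℕ):ℝ) + 1) * p k * t ^ (k:ℕ)|)
      = fun p => g (p 0, fun j => p (Fin.succ j)) := by
    funext p
    have hkey : (∑ k : Fin (m+1), (((k:ℕ):ℝ) + 1) * p k * t ^ (k:ℕ))
        = p 0 + ∑ j : Fin m, (((j:ℕ):ℝ) + 2) * t ^ ((j:ℕ)+1) * p j.succ := by
      rw [Fin.sum_univ_succ]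
      simp only [Fin.val_zero, Fin.val_succ, Nat.cast_zero, pow_zero, Nat.cast_add,
        Nat.cast_one]
      rw [Finset.sum_congr rfl fun (j : Fin m) (_ : j ∈ Finset.univ) =>
        show (((j:ℕ):ℝ)+1+1) * p j.succ * t^((j:ℕ)+1)
          = (((j:ℕ):ℝ) + 2) * t ^ ((j:ℕ)+1) * p j.succ from by ring]
      ring
    simp only [hg, hkey]
  have hgc : Continuous g := by
    simp only [hg]
    exact continuous_abs.comp (continuous_fst.add
      (continuous_finset_sum _ fun j _ =>
        continuous_const.mul ((continuous_apply j).comp continuous_snd)))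
  rw [show (∫ p in cubeN (m+1), |∑ k : Fin (m+1), (((k:ℕ):ℝ) + 1) * p k * t ^ (k:ℕ)|)
      = ∫ p in cubeN (m+1), g (p 0, fun j => p (Fin.succ j)) from by rw [← hsum],
    peel m g hgc]
  -- inner integral
  have hin : ∀ q ∈ cubeN m, (∫ x in Set.Icc (-1:ℝ) 1, g (x, q))
      = 1 + (∑ j : Fin m, (((j:ℕ):ℝ) + 2) * t ^ ((j:ℕ)+1) * q j)^2 := by
    intro q hq
    have hqle : ∀ j, |q j| ≤ 1 := fun j => abs_le.mpr (hq j (Set.mem_univ j))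
    have hcle : |∑ j : Fin m, (((j:ℕ):ℝ) + 2) * t ^ ((j:ℕ)+1) * q j| ≤ 1 := by
      calc |∑ j : Fin m, (((j:ℕ):ℝ) + 2) * t ^ ((j:ℕ)+1) * q j|
          ≤ ∑ j : Fin m, |(((j:ℕ):ℝ) + 2) * t ^ ((j:ℕ)+1) * q j| :=
            Finset.abs_sum_le_sum_abs _ _
        _ ≤ ∑ j : Fin m, (((j:ℕ):ℝ) + 2) * |t| ^ ((j:ℕ)+1) := by
            refine Finset.sum_le_sum fun j _ => ?_
            rw [abs_mul, abs_mul, abs_pow]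
            have h2 : |(((j:ℕ):ℝ) + 2)| = ((j:ℕ):ℝ) + 2 := abs_of_nonneg (by positivity)
            rw [h2]
            calc (((j:ℕ):ℝ) + 2) * |t| ^ ((j:ℕ)+1) * |q j|
                ≤ (((j:ℕ):ℝ) + 2) * |t| ^ ((j:ℕ)+1) * 1 :=
                  mul_le_mul_of_nonneg_left (hqle j) (by positivity)
              _ = (((j:ℕ):ℝ) + 2) * |t| ^ ((j:ℕ)+1) := by ring
        _ = ∑ i ∈ Finset.range m, ((i:ℝ) + 2) * |t| ^ (i + 1) := by
            rw [Fin.sum_univ_eq_sum_range (fun i => ((i:ℝ) + 2) * |t| ^ (i+1)) m]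
        _ ≤ 1 := ht1'
    simpa only [hg] using oneD_abs _ hcle
  rw [setIntegral_congr_fun (cube_compact m).measurableSet hin]
  -- split the integral
  have hints : IntegrableOn
      (fun q : Fin m → ℝ => (∑ j : Fin m, (((j:ℕ):ℝ) + 2) * t ^ ((j:ℕ)+1) * q j)^2)
      (cubeN m) volume :=
    Continuous.continuousOn ((continuous_finset_sum _ fun j _ =>
      continuous_const.mul (continuous_apply j)).pow 2) |>.integrableOn_compact (cube_compact m)
  rw [integral_add ((integrableOn_const_iff (C := (1 : ℝ))).mpr (Or.inr ((cube_compact m).measure_lt_top))) hints,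
    setIntegral_const, sq_int m (fun j => (((j:ℕ):ℝ) + 2) * t ^ ((j:ℕ)+1))]
  simp only [smul_eq_mul, measureReal_def, cube_volume, mul_one]
  rw [show m + 1 - 1 = m from rfl, ← Finset.Ico_add_one_right_eq_Icc, Finset.sum_Ico_eq_sum_range,
    show m + 1 - 1 = m from rfl,
    Fin.sum_univ_eq_sum_range (fun j => (((j:ℝ) + 2) * t ^ (j+1))^2) m]
  have hsum2 : ∑ i ∈ Finset.range m, (((1+i:ℕ):ℝ) + 1) ^ 2 * t ^ (2 * (1 + i))
      = ∑ i ∈ Finset.range m, (((i:ℝ) + 2) * t ^ (i+1))^2 :=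
    Finset.sum_congr rfl fun i _ => by push_cast; ring
  rw [hsum2]
  ring
end

section
/- The function φ_n(t) = ∫_{Δ_n(t)} |Σ_{k=1}^n k p_k t^{k-1}| dp₁...dp_n, with Δ_n(t) = {(p₁,...,p_n) ∈ ℝ^n : max_i |p_i| ≤ 1, |Σ_{k=1}^n p_k t^k| ≤ 1}, satisfies the functional equation t² φ_n(t) = φ_n(1/t) for all t ≠ 0. -/
/-- Auxiliary: the reversal-with-fixed-last-point function on `Fin n`. -/
private def revFun (n : ℕ) (i : Fin n) : Fin n :=
  if h : (i : ℕ) + 1 < n then ⟨n - 2 - (i : ℕ), by omega⟩ else i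

private lemma revFun_invol (n : ℕ) : Function.Involutive (revFun n) := by
  intro i
  by_cases h1 : (i : ℕ) + 1 < n
  · have h2 : (n - 2 - (i : ℕ)) + 1 < n := by omega
    simp only [revFun, h1, dif_pos]
    ext
    simp only [h2, dif_pos]
    omega
  · simp [revFun, h1]

private def sigmaN (n : ℕ) : Equiv.Perm (Fin n) := (revFun_invol n).toPerm _

private lemma sigmaN_apply (n : ℕ) (i : Fin n) : sigmaN n i = revFun n i := rfl

private def Lmat (n : ℕ) (t : ℝ) : Matrix (Fin n) (Fin n) ℝ :=
  Matrix.of fun i j =>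
    if (i : ℕ) + 1 < n then (if j = i then (1 : ℝ) else 0) else -t ^ ((j : ℕ) + 1)

private def Tmat (n : ℕ) (t : ℝ) : Matrix (Fin n) (Fin n) ℝ :=
  (Lmat n t).submatrix (sigmaN n) id

noncomputable def TlinX (n : ℕ) (t : ℝ) : (Fin n → ℝ) →ₗ[ℝ] (Fin n → ℝ) :=
  Matrix.toLin' (Tmat n t)

private lemma Tlin_apply_lt (n : ℕ) (t : ℝ) (p : Fin n → ℝ) (i k : Fin n)
    (h : (i : ℕ) + 1 < n) (hk : (k : ℕ) = n - 2 - (i : ℕ)) :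
    TlinX n t p i = p k := by
  have hσ : sigmaN n i = k := by
    rw [sigmaN_apply, revFun, dif_pos h]
    exact Fin.ext hk.symm
  have hk2 : (k : ℕ) + 1 < n := by omega
  simp only [TlinX, Matrix.toLin'_apply, Matrix.mulVec, dotProduct, Tmat,
    Matrix.submatrix_apply, id_eq, hσ, Lmat, Matrix.of_apply, hk2, if_true]
  simp [ite_mul]

private lemma Tlin_apply_last (n : ℕ) (t : ℝ) (p : Fin n → ℝ) (i : Fin n)
    (h : ¬ ((i : ℕ) + 1 < n)) :
    TlinX n t p i = -∑ k : Fin n, p k * t ^ ((k : ℕ) + 1) := by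
  have hσ : sigmaN n i = i := by rw [sigmaN_apply, revFun, dif_neg h]
  simp only [TlinX, Matrix.toLin'_apply, Matrix.mulVec, dotProduct, Tmat,
    Matrix.submatrix_apply, id_eq, hσ, Lmat, Matrix.of_apply, h, if_false]
  rw [← Finset.sum_neg_distrib]
  exact Finset.sum_congr rfl fun j _ => by ring

private lemma sum_T (n : ℕ) (hn : 0 < n) (t : ℝ) (p c : Fin n → ℝ) :
    ∑ j : Fin n, c j * TlinX n t p j
      = (∑ k : Fin n, (if (k : ℕ) + 1 < n then c ⟨n - 2 - (k : ℕ), by omega⟩ else 0) * p k)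
        - c ⟨n - 1, by omega⟩ * ∑ k : Fin n, p k * t ^ ((k : ℕ) + 1) := by
  classical
  have h1 : ∑ j : Fin n, c j * TlinX n t p j
      = ∑ j : Fin n, c (sigmaN n j) * TlinX n t p (sigmaN n j) :=
    (Equiv.sum_comp (sigmaN n) (fun j => c j * TlinX n t p j)).symm
  rw [h1]
  have h2 : ∀ j : Fin n,
      c (sigmaN n j) * TlinX n t p (sigmaN n j)
        = (if (j : ℕ) + 1 < n then c ⟨n - 2 - (j : ℕ), by omega⟩ else 0) * p j
          + (if j = (⟨n - 1, by omega⟩ : Fin n) then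
              c ⟨n - 1, by omega⟩ * -(∑ k : Fin n, p k * t ^ ((k : ℕ) + 1)) else 0) := by
    intro j
    by_cases hj : (j : ℕ) + 1 < n
    · have hσ : sigmaN n j = (⟨n - 2 - (j : ℕ), by omega⟩ : Fin n) := by
        rw [sigmaN_apply, revFun, dif_pos hj]
      have hne : j ≠ (⟨n - 1, by omega⟩ : Fin n) := by
        intro hEq
        have : (j : ℕ) = n - 1 := by rw [hEq]
        omega
      rw [hσ, if_pos hj, if_neg hne,
        Tlin_apply_lt n t p _ j (by simp; omega) (by simp; omega)]
      ring
    · have hσ : sigmaN n j = j := by rw [sigmaN_apply, revFun, dif_neg hj]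
      have hje : j = (⟨n - 1, by omega⟩ : Fin n) := by
        have := j.isLt; exact Fin.ext (by simp; omega)
      rw [hσ, if_neg hj, if_pos hje, Tlin_apply_last n t p j hj, ← hje]
      ring
  rw [Finset.sum_congr rfl (fun j _ => h2 j), Finset.sum_add_distrib,
    Finset.sum_ite_eq' Finset.univ (⟨n - 1, by omega⟩ : Fin n)]
  simp only [Finset.mem_univ, if_true]
  ring

private lemma abs_det_Tmat (n : ℕ) (t : ℝ) : |(Tmat n t).det| = |t| ^ n := by
  rcases Nat.eq_zero_or_pos n with h | h
  · subst h
    simp [Matrix.det_isEmpty]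
  · rw [Tmat, Matrix.det_permute, abs_mul]
    have h1 : |((Equiv.Perm.sign (sigmaN n) : ℤ) : ℝ)| = 1 := by
      rcases Int.units_eq_one_or (Equiv.Perm.sign (sigmaN n)) with h' | h' <;> simp [h']
    rw [h1, one_mul]
    have hbt : (Lmat n t).BlockTriangular OrderDual.toDual := by
      intro i j hij
      have hlt : (i : ℕ) < (j : ℕ) := hij
      have hj := j.isLt
      simp only [Lmat, Matrix.of_apply, if_pos (show (i : ℕ) + 1 < n by omega)]
      rw [if_neg (by intro hEq; rw [hEq] at hlt; omega)]
    rw [Matrix.det_of_lowerTriangular _ hbt]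
    obtain ⟨m, rfl⟩ : ∃ m, n = m + 1 := ⟨n - 1, by omega⟩
    have hdiag : ∀ i : Fin (m + 1),
        Lmat (m + 1) t i i = if (i : ℕ) + 1 < m + 1 then (1 : ℝ) else -t ^ ((i : ℕ) + 1) := by
      intro i
      simp [Lmat]
    rw [Finset.prod_congr rfl (fun i _ => hdiag i), Fin.prod_univ_castSucc]
    have hc : ∀ i : Fin m, ((i.castSucc : ℕ) + 1 < m + 1) := by
      intro i; simp only [Fin.coe_castSucc]; have := i.isLt; omega
    have hl : ¬ (((Fin.last m : Fin (m + 1)) : ℕ) + 1 < m + 1) := by simp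
    rw [Finset.prod_congr rfl (fun i _ => if_pos (hc i)), if_neg hl]
    simp [abs_pow]

private lemma tpow_cancel {t : ℝ} (ht : t ≠ 0) {a b c : ℕ} (h : a = b + c) :
    t ^ a * (1 / t) ^ b = t ^ c := by
  rw [one_div, inv_pow, h, pow_add, mul_comm (t ^ b), mul_assoc,
    mul_inv_cancel₀ (pow_ne_zero _ ht), mul_one]

/-- The key sum identity for membership: `∑ (Tp)_k (1/t)^{k+1} = -p_{n-1}`. -/
private lemma sum_mem_eq (n : ℕ) (hn : 0 < n) (t : ℝ) (ht : t ≠ 0) (p : Fin n → ℝ) :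
    ∑ k : Fin n, TlinX n t p k * (1 / t) ^ ((k : ℕ) + 1) = -p ⟨n - 1, by omega⟩ := by
  classical
  apply mul_left_cancel₀ (pow_ne_zero n ht)
  rw [Finset.mul_sum]
  have step1 : ∀ k : Fin n,
      t ^ n * (TlinX n t p k * (1 / t) ^ ((k : ℕ) + 1))
        = t ^ (n - 1 - (k : ℕ)) * TlinX n t p k := by
    intro k
    have hk := k.isLt
    have h := tpow_cancel ht (show n = ((k : ℕ) + 1) + (n - 1 - (k : ℕ)) by omega)
    linear_combination TlinX n t p k * h
  rw [Finset.sum_congr rfl (fun k _ => step1 k),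
    sum_T n hn t p (fun k => t ^ (n - 1 - (k : ℕ)))]
  have hterm : ∀ k : Fin n,
      (if (k : ℕ) + 1 < n then t ^ (n - 1 - (n - 2 - (k : ℕ))) else 0) * p k
        - t ^ (n - 1 - (n - 1)) * (p k * t ^ ((k : ℕ) + 1))
        = if k = (⟨n - 1, by omega⟩ : Fin n) then -(t ^ n) * p k else 0 := by
    intro k
    have hk := k.isLt
    by_cases h : (k : ℕ) + 1 < n
    · rw [if_pos h, if_neg (by rintro rfl; simp at h; omega)]
      rw [show n - 1 - (n - 2 - (k : ℕ)) = (k : ℕ) + 1 by omega,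
        show n - 1 - (n - 1) = 0 by omega]
      ring
    · rw [if_neg h, if_pos (Fin.ext (by simp; omega)),
        show n - 1 - (n - 1) = 0 by omega, show (k : ℕ) + 1 = n by omega]
      ring
  rw [show (∑ k : Fin n, (if (k : ℕ) + 1 < n then t ^ (n - 1 - (n - 2 - (k : ℕ))) else 0) * p k)
        - t ^ (n - 1 - (n - 1)) * ∑ k : Fin n, p k * t ^ ((k : ℕ) + 1)
      = ∑ k : Fin n, ((if (k : ℕ) + 1 < n then t ^ (n - 1 - (n - 2 - (k : ℕ))) else 0) * p k
          - t ^ (n - 1 - (n - 1)) * (p k * t ^ ((k : ℕ) + 1))) by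
    rw [Finset.sum_sub_distrib, Finset.mul_sum]]
  rw [Finset.sum_congr rfl (fun k _ => hterm k),
    Finset.sum_ite_eq' Finset.univ (⟨n - 1, by omega⟩ : Fin n)]
  simp only [Finset.mem_univ, if_true]
  ring

/-- The key integrand identity: `t^n * (deriv sum at Tp, 1/t) = -(t^2 * deriv sum at p, t)`. -/
private lemma sum_deriv_eq (n : ℕ) (hn : 0 < n) (t : ℝ) (ht : t ≠ 0) (p : Fin n → ℝ) :
    t ^ n * ∑ k : Fin n, ((k : ℕ) + 1 : ℝ) * TlinX n t p k * (1 / t) ^ (k : ℕ)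
      = -(t ^ 2 * ∑ k : Fin n, ((k : ℕ) + 1 : ℝ) * p k * t ^ (k : ℕ)) := by
  classical
  rw [Finset.mul_sum]
  have step1 : ∀ k : Fin n,
      t ^ n * (((k : ℕ) + 1 : ℝ) * TlinX n t p k * (1 / t) ^ (k : ℕ))
        = (((k : ℕ) + 1 : ℝ) * t ^ (n - (k : ℕ))) * TlinX n t p k := by
    intro k
    have hk := k.isLt
    have h := tpow_cancel ht (show n = (k : ℕ) + (n - (k : ℕ)) by omega)
    linear_combination ((k : ℕ) + 1 : ℝ) * TlinX n t p k * h
  rw [Finset.sum_congr rfl (fun k _ => step1 k),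
    sum_T n hn t p (fun k => ((k : ℕ) + 1 : ℝ) * t ^ (n - (k : ℕ))), Finset.mul_sum,
    ← Finset.sum_sub_distrib, Finset.mul_sum, ← Finset.sum_neg_distrib]
  refine Finset.sum_congr rfl fun k _ => ?_
  have hk := k.isLt
  simp only []
  by_cases h : (k : ℕ) + 1 < n
  · rw [if_pos h]
    have h2 : (k : ℕ) ≤ n - 2 := by omega
    have h3 : 2 ≤ n := by omega
    have e1 : n - (n - 2 - (k : ℕ)) = (k : ℕ) + 2 := by omega
    have e2 : n - (n - 1) = 1 := by omega
    simp only [e1, e2]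
    push_cast [Nat.cast_sub h2, Nat.cast_sub h3, Nat.cast_sub (show 1 ≤ n by omega)]
    ring
  · rw [if_neg h]
    have hke : (k : ℕ) = n - 1 := by omega
    have e2 : n - (n - 1) = 1 := by omega
    simp only [hke, e2]
    ring

private lemma mem_Delta_iff (n : ℕ) (hn : 0 < n) (t : ℝ) (ht : t ≠ 0) (p : Fin n → ℝ) :
    TlinX n t p ∈ DeltaN n (1 / t) ↔ p ∈ DeltaN n t := by
  have hlast : ¬ (((⟨n - 1, by omega⟩ : Fin n) : ℕ) + 1 < n) := by simp; omega
  have ha : TlinX n t p ⟨n - 1, by omega⟩ = -∑ k : Fin n, p k * t ^ ((k : ℕ) + 1) :=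
    Tlin_apply_last n t p _ hlast
  have hb : ∑ k : Fin n, TlinX n t p k * (1 / t) ^ ((k : ℕ) + 1) = -p ⟨n - 1, by omega⟩ :=
    sum_mem_eq n hn t ht p
  constructor
  · rintro ⟨h1, h2⟩
    rw [hb] at h2
    constructor
    · intro i
      by_cases hi : (i : ℕ) + 1 < n
      · have : p i = TlinX n t p ⟨n - 2 - (i : ℕ), by omega⟩ :=
          (Tlin_apply_lt n t p ⟨n - 2 - (i : ℕ), by omega⟩ i (by simp; omega)
            (by simp; omega)).symm
        rw [this]
        exact h1 _
      · have : i = (⟨n - 1, by omega⟩ : Fin n) := Fin.ext (by simp; omega)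
        rw [this, ← abs_neg]
        exact h2
    · have := h1 ⟨n - 1, by omega⟩
      rw [ha, abs_neg] at this
      exact this
  · rintro ⟨h1, h2⟩
    constructor
    · intro i
      by_cases hi : (i : ℕ) + 1 < n
      · rw [Tlin_apply_lt n t p i ⟨n - 2 - (i : ℕ), by omega⟩ hi (by simp)]
        exact h1 _
      · rw [Tlin_apply_last n t p i hi, abs_neg]
        exact h2
    · rw [hb, abs_neg]
      exact h1 _

private lemma measurableSet_DeltaN (n : ℕ) (t : ℝ) : MeasurableSet (DeltaN n t) := by
  have : DeltaN n t = (⋂ i, {p : Fin n → ℝ | |p i| ≤ 1})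
      ∩ {p : Fin n → ℝ | |∑ k : Fin n, p k * t ^ ((k : ℕ) + 1)| ≤ 1} := by
    ext p
    simp [DeltaN, Set.mem_iInter]
  rw [this]
  refine (MeasurableSet.iInter fun i => ?_).inter ?_
  · exact measurableSet_le ((measurable_pi_apply i).abs) measurable_const
  · refine measurableSet_le (Measurable.abs ?_) measurable_const
    exact Finset.measurable_sum _ fun k _ => (measurable_pi_apply k).mul_const _


theorem phiN_inversion (n : ℕ) (t : ℝ) (ht : t ≠ 0) :
    t ^ 2 * phiN n t = phiN n (1 / t) := by
  rcases Nat.eq_zero_or_pos n with hn | hn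
  · subst hn
    simp [phiN]
  · set T := TlinX n t with hT
    have hdet : LinearMap.det T = (Tmat n t).det := LinearMap.det_toLin' _
    have habs : |LinearMap.det T| = |t| ^ n := by rw [hdet, abs_det_Tmat]
    have hdet0 : LinearMap.det T ≠ 0 := by
      intro h0
      rw [h0, abs_zero] at habs
      exact (pow_ne_zero n (abs_ne_zero.mpr ht)) habs.symm
    set e := LinearMap.equivOfDetNeZero T hdet0 with he
    have hecoe : (e : (Fin n → ℝ) →ₗ[ℝ] (Fin n → ℝ)) = T := LinearEquiv.coe_ofIsUnitDet _
    have heapp : ∀ x, e x = T x := by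
      intro x
      rw [← hecoe]
      rfl
    set Tc : (Fin n → ℝ) →L[ℝ] (Fin n → ℝ) := LinearMap.toContinuousLinearMap T with hTcdef
    have hTc : ∀ x, Tc x = T x := fun x => rfl
    have hinj : Set.InjOn (⇑Tc) (DeltaN n t) := by
      intro a _ b _ hab
      apply e.injective
      rw [heapp, heapp, ← hTc, ← hTc]
      exact hab
    have himg : ⇑Tc '' DeltaN n t = DeltaN n (1 / t) := by
      ext q
      constructor
      · rintro ⟨p, hp, rfl⟩
        rw [hTc p]
        exact (mem_Delta_iff n hn t ht p).mpr hp
      · intro hq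
        have hq' : T (e.symm q) = q := by
          rw [← heapp]
          exact e.apply_symm_apply q
        refine ⟨e.symm q, ?_, by rw [hTc, hq']⟩
        apply (mem_Delta_iff n hn t ht _).mp
        rwa [hq']
    have hCoV := MeasureTheory.integral_image_eq_integral_abs_det_fderiv_smul
      MeasureTheory.volume (measurableSet_DeltaN n t)
      (fun x _ => (Tc.hasFDerivAt).hasFDerivWithinAt) hinj
      (fun q => |∑ k : Fin n, ((k : ℕ) + 1 : ℝ) * q k * (1 / t) ^ (k : ℕ)|)
    have hcdet : ContinuousLinearMap.det Tc = LinearMap.det T := by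
      rw [ContinuousLinearMap.det, LinearMap.coe_toContinuousLinearMap]
    have hpt : ∀ p : Fin n → ℝ,
        |ContinuousLinearMap.det Tc| • |∑ k : Fin n, ((k : ℕ) + 1 : ℝ) * Tc p k * (1 / t) ^ (k : ℕ)|
          = t ^ 2 * |∑ k : Fin n, ((k : ℕ) + 1 : ℝ) * p k * t ^ (k : ℕ)| := by
      intro p
      have hTcp : ∀ k, Tc p k = TlinX n t p k := fun k => by rw [hTc]
      simp only [hTcp]
      rw [smul_eq_mul, hcdet, habs, ← abs_pow, ← abs_mul, sum_deriv_eq n hn t ht p,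
        abs_neg, abs_mul, abs_pow, sq_abs]
    calc t ^ 2 * phiN n t
        = ∫ p in DeltaN n t, t ^ 2 * |∑ k : Fin n, ((k : ℕ) + 1 : ℝ) * p k * t ^ (k : ℕ)| := by
          rw [phiN, MeasureTheory.integral_const_mul]
      _ = ∫ p in DeltaN n t, |ContinuousLinearMap.det Tc|
            • |∑ k : Fin n, ((k : ℕ) + 1 : ℝ) * Tc p k * (1 / t) ^ (k : ℕ)| := by
          exact MeasureTheory.integral_congr_ae (Filter.Eventually.of_forall fun p => (hpt p).symm)
      _ = ∫ q in ⇑Tc '' DeltaN n t, |∑ k : Fin n, ((k : ℕ) + 1 : ℝ) * q k * (1 / t) ^ (k : ℕ)| :=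
          hCoV.symm
      _ = phiN n (1 / t) := by rw [himg, phiN]
end
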